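/- arXiv:2307.02204 — 9 statements merged into one kernel-verified Lean document; each statement's English description precedes it below -/
import Mathlib

section
/- Let H_S and H_I be complex Hilbert spaces, (ξ_n)_{n∈ℕ} an orthonormal family in H_I, r : ℕ → ℂ, and for each n let θ ↦ φ_n(θ) ∈ H_S be differentiable. Assume Σ_n |r_n|²‖φ_n(θ)‖² converges, set N(θ) := 1 − Σ_n |r_n|²‖φ_n(θ)‖², assume 0 ≤ N(θ) < 1, and assume the map θ ↦ Σ_n r_n φ_n(θ) ⊗ ξ_n is norm-convergent and differentiable with derivative Σ_n r_n (∂_θφ_n)(θ) ⊗ ξ_n (also norm-convergent). Define Φ(θ) := (1 − N(θ))^{−1/2} Σ_n r_n φ_n(θ) ⊗ ξ_n. Then Φ(θ) is a unit vector and its pure-state quantum Fisher information equals Q(θ; Φ) = (4/(1−N(θ))) Σ_n |r_n|² ‖∂_θφ_n(θ)‖² − (4/(1−N(θ))²) |Σ_n |r_n|² ⟨φ_n(θ), ∂_θφ_n(θ)⟩|². -/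
/-!
Orthonormality of `(ξₙ)` kills the cross terms, so inner products of the series
`Σ rₙ aₙ ⊗ ξₙ` and `Σ rₙ bₙ ⊗ ξₙ` are the diagonal sums `Σ |rₙ|² ⟪aₙ, bₙ⟫`; in particular
`1 - N = ‖S‖²`, so `Φ = S / ‖S‖`. Differentiating the normalisation factor only adds a real
multiple of `Φ` to `Φ'`, which the quantum Fisher information does not see, so
`Q = 4 (‖S'‖² / ‖S‖² - |⟪S, S'⟫|² / ‖S‖⁴)`, and the three series give the claimed formula.
-/

open scoped InnerProductSpace

section OrthogonalSeries

variable {𝕜 ι E : Type*} [RCLike 𝕜] [NormedAddCommGroup E] [InnerProductSpace 𝕜 E]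

theorem HasSum.inner_left {u : ι → E} {x : E} (hu : HasSum u x) (w : E) :
    HasSum (fun n => ⟪u n, w⟫_𝕜) ⟪x, w⟫_𝕜 := by
  simpa only [innerSL_apply_apply, RCLike.star_def, inner_conj_symm]
    using (hu.mapL (innerSL 𝕜 w)).star

theorem HasSum.inner_of_orthogonal {u v : ι → E} {x y : E} (hu : HasSum u x) (hv : HasSum v y)
    (huv : ∀ n m, n ≠ m → ⟪u n, v m⟫_𝕜 = 0) :
    HasSum (fun n => ⟪u n, v n⟫_𝕜) ⟪x, y⟫_𝕜 := by
  have hdiag : ∀ m, ⟪x, v m⟫_𝕜 = ⟪u m, v m⟫_𝕜 := fun m =>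
    (hu.inner_left (v m)).unique (hasSum_single m fun n hn => huv n m hn)
  simpa only [innerSL_apply_apply, hdiag] using hv.mapL (innerSL 𝕜 x)

end OrthogonalSeries

section TensorSeries

variable {ι H_S H_I E : Type*}
  [NormedAddCommGroup H_S] [InnerProductSpace ℂ H_S]
  [NormedAddCommGroup H_I] [InnerProductSpace ℂ H_I]
  [NormedAddCommGroup E] [InnerProductSpace ℂ E]
  {T : H_S → H_I → E} {ξ : ι → H_I}

theorem inner_smul_tensor_of_ne
    (hT : ∀ a b c d, ⟪T a b, T c d⟫_ℂ = ⟪a, c⟫_ℂ * ⟪b, d⟫_ℂ) (hξ : Orthonormal ℂ ξ)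
    (r : ι → ℂ) (a b : H_S) {n m : ι} (hnm : n ≠ m) :
    ⟪r n • T a (ξ n), r m • T b (ξ m)⟫_ℂ = 0 := by
  rw [inner_smul_left, inner_smul_right, hT, hξ.2 hnm, mul_zero, mul_zero, mul_zero]

theorem inner_smul_tensor_self
    (hT : ∀ a b c d, ⟪T a b, T c d⟫_ℂ = ⟪a, c⟫_ℂ * ⟪b, d⟫_ℂ) (hξ : Orthonormal ℂ ξ)
    (r : ι → ℂ) (a b : H_S) (n : ι) :
    ⟪r n • T a (ξ n), r n • T b (ξ n)⟫_ℂ = ((‖r n‖ ^ 2 : ℝ) : ℂ) * ⟪a, b⟫_ℂ := by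
  rw [inner_smul_left, inner_smul_right, hT, inner_self_eq_one_of_norm_eq_one (hξ.1 n),
    Complex.ofReal_pow, ← Complex.mul_conj']
  ring

theorem hasSum_inner_of_orthonormal_tensor
    (hT : ∀ a b c d, ⟪T a b, T c d⟫_ℂ = ⟪a, c⟫_ℂ * ⟪b, d⟫_ℂ) (hξ : Orthonormal ℂ ξ)
    {r : ι → ℂ} {a b : ι → H_S} {x y : E}
    (hx : HasSum (fun n => r n • T (a n) (ξ n)) x) (hy : HasSum (fun n => r n • T (b n) (ξ n)) y) :
    HasSum (fun n => ((‖r n‖ ^ 2 : ℝ) : ℂ) * ⟪a n, b n⟫_ℂ) ⟪x, y⟫_ℂ := by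
  simpa only [inner_smul_tensor_self hT hξ] using
    hx.inner_of_orthogonal hy fun n m => inner_smul_tensor_of_ne hT hξ r (a n) (b m)

theorem hasSum_norm_sq_of_orthonormal_tensor
    (hT : ∀ a b c d, ⟪T a b, T c d⟫_ℂ = ⟪a, c⟫_ℂ * ⟪b, d⟫_ℂ) (hξ : Orthonormal ℂ ξ)
    {r : ι → ℂ} {a : ι → H_S} {x : E} (hx : HasSum (fun n => r n • T (a n) (ξ n)) x) :
    HasSum (fun n => ‖r n‖ ^ 2 * ‖a n‖ ^ 2) (‖x‖ ^ 2) := by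
  have := Complex.hasSum_re (hasSum_inner_of_orthonormal_tensor hT hξ hx hx)
  simp only [Complex.re_ofReal_mul] at this
  simpa only [← RCLike.re_to_complex, inner_self_eq_norm_sq] using this

end TensorSeries

section PureStateQFI

variable {E : Type*} [NormedAddCommGroup E] [InnerProductSpace ℂ E]

noncomputable def pureStateQFI (ψ dψ : E) : ℝ := 4 * (‖dψ‖ ^ 2 - ‖⟪ψ, dψ⟫_ℂ‖ ^ 2)

theorem pureStateQFI_add_ofReal_smul {ψ : E} (hψ : ‖ψ‖ = 1) (w : E) (μ : ℝ) :
    pureStateQFI ψ (w + (μ : ℂ) • ψ) = pureStateQFI ψ w := by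
  have hnorm : ‖w + (μ : ℂ) • ψ‖ ^ 2 = ‖w‖ ^ 2 + 2 * μ * (⟪ψ, w⟫_ℂ).re + μ ^ 2 := by
    rw [@norm_add_sq ℂ, inner_smul_right, norm_smul, hψ, ← inner_conj_symm, RCLike.re_to_complex,
      Complex.re_ofReal_mul, Complex.conj_re, Complex.norm_real, Real.norm_eq_abs, mul_one, sq_abs]
    ring
  have hinner : ⟪ψ, w + (μ : ℂ) • ψ⟫_ℂ = ⟪ψ, w⟫_ℂ + μ := by
    rw [inner_add_right, inner_smul_right, inner_self_eq_one_of_norm_eq_one hψ, mul_one]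
  unfold pureStateQFI
  rw [hnorm, hinner, Complex.sq_norm, Complex.sq_norm, Complex.normSq_apply, Complex.normSq_apply]
  simp only [Complex.add_re, Complex.add_im, Complex.ofReal_re, Complex.ofReal_im, add_zero]
  ring

theorem hasDerivAt_norm_of_ne_zero {S : ℝ → E} {D : E} {θ : ℝ} (hS : HasDerivAt S D θ)
    (h0 : S θ ≠ 0) : HasDerivAt (fun t => ‖S t‖) ((⟪S θ, D⟫_ℂ).re / ‖S θ‖) θ := by
  -- the real inner product `re ⟪·, ·⟫_ℂ`, which `HasDerivAt.norm_sq` needs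
  let _ := InnerProductSpace.rclikeToReal ℂ E
  have hsq : HasDerivAt (fun t => ‖S t‖ ^ 2) (2 * (⟪S θ, D⟫_ℂ).re) θ := hS.norm_sq
  have hpos : 0 < ‖S θ‖ := norm_pos_iff.mpr h0
  convert (hsq.sqrt (by positivity)) using 1
  · simp only [Real.sqrt_sq (norm_nonneg _)]
  · rw [Real.sqrt_sq hpos.le]; ring

theorem HasDerivAt.inv_norm_smul {S : ℝ → E} {D : E} {θ : ℝ} (hS : HasDerivAt S D θ)
    (h0 : S θ ≠ 0) :
    HasDerivAt (fun t => (‖S t‖ : ℂ)⁻¹ • S t)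
      ((‖S θ‖ : ℂ)⁻¹ • D + ((-(⟪S θ, D⟫_ℂ).re / ‖S θ‖ ^ 2 : ℝ) : ℂ) • ((‖S θ‖ : ℂ)⁻¹ • S θ)) θ := by
  have hs : (‖S θ‖ : ℂ) ≠ 0 := by simpa using h0
  have hinv := ((hasDerivAt_norm_of_ne_zero hS h0).ofReal_comp).inv hs
  refine (hinv.smul hS).congr_deriv ?_
  rw [smul_smul, Pi.inv_apply]
  congr 2
  push_cast
  field_simp

theorem pureStateQFI_inv_norm_smul {x : E} (hx : x ≠ 0) (v : E) (μ : ℝ) :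
    pureStateQFI ((‖x‖ : ℂ)⁻¹ • x) ((‖x‖ : ℂ)⁻¹ • v + (μ : ℂ) • ((‖x‖ : ℂ)⁻¹ • x)) =
      4 * (‖v‖ ^ 2 / ‖x‖ ^ 2 - ‖⟪x, v⟫_ℂ‖ ^ 2 / ‖x‖ ^ 4) := by
  have hunit : ‖(‖x‖ : ℂ)⁻¹ • x‖ = 1 := norm_smul_inv_norm hx
  rw [pureStateQFI_add_ofReal_smul hunit, pureStateQFI, inner_smul_left,
    inner_smul_right, norm_smul, norm_mul, norm_mul, map_inv₀, Complex.conj_ofReal]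
  simp only [norm_inv, Complex.norm_real, norm_norm]
  ring

end PureStateQFI

theorem biphoton_outgoing_QFI_general
    {H_S H_I E : Type*}
    [NormedAddCommGroup H_S] [InnerProductSpace ℂ H_S]
    [NormedAddCommGroup H_I] [InnerProductSpace ℂ H_I]
    [NormedAddCommGroup E] [InnerProductSpace ℂ E]
    (tens : H_S →ₗ[ℂ] H_I →ₗ[ℂ] E)
    (htens : ∀ (a : H_S) (b : H_I) (c : H_S) (d : H_I),
      (inner ℂ (tens a b) (tens c d) : ℂ) = (inner ℂ a c : ℂ) * (inner ℂ b d : ℂ))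
    (ξ : ℕ → H_I) (hξ : Orthonormal ℂ ξ)
    (r : ℕ → ℂ) (φ φd : ℕ → ℝ → H_S)
    (θ : ℝ)
    (N : ℝ → ℝ) (hN : ∀ t, N t = 1 - ∑' n, ‖r n‖ ^ 2 * ‖φ n t‖ ^ 2)
    (hN1 : N θ < 1)
    (S D : ℝ → E)
    (hS : ∀ t, HasSum (fun n => r n • tens (φ n t) (ξ n)) (S t))
    (hD : ∀ t, HasSum (fun n => r n • tens (φd n t) (ξ n)) (D t))
    (hSD : ∀ t, HasDerivAt S (D t) t)
    (Φ : ℝ → E) (hΦ : ∀ t, Φ t = ((Real.sqrt (1 - N t) : ℝ) : ℂ)⁻¹ • S t) :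
    ‖Φ θ‖ = 1 ∧
      ∃ Φd : E, HasDerivAt Φ Φd θ ∧
        4 * (‖Φd‖ ^ 2 - ‖(inner ℂ (Φ θ) Φd : ℂ)‖ ^ 2) =
          4 / (1 - N θ) * ∑' n, ‖r n‖ ^ 2 * ‖φd n θ‖ ^ 2
            - 4 / (1 - N θ) ^ 2 *
              ‖(∑' n, ((‖r n‖ ^ 2 : ℝ) : ℂ) * (inner ℂ (φ n θ) (φd n θ) : ℂ))‖ ^ 2 := by
  have hN_eq : ∀ t, 1 - N t = ‖S t‖ ^ 2 := fun t => by
    rw [hN t, (hasSum_norm_sq_of_orthonormal_tensor htens hξ (hS t)).tsum_eq, sub_sub_cancel]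
  have hS0 : S θ ≠ 0 := fun h => by
    have := hN_eq θ
    rw [h, norm_zero, zero_pow two_ne_zero] at this
    linarith
  have hΦ_eq : Φ = fun t => (‖S t‖ : ℂ)⁻¹ • S t := funext fun t => by
    rw [hΦ t, hN_eq t, Real.sqrt_sq (norm_nonneg _)]
  subst hΦ_eq
  refine ⟨norm_smul_inv_norm hS0, _, (hSD θ).inv_norm_smul hS0, ?_⟩
  rw [← pureStateQFI, pureStateQFI_inv_norm_smul hS0, hN_eq,
    (hasSum_norm_sq_of_orthonormal_tensor htens hξ (hD θ)).tsum_eq,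
    (hasSum_inner_of_orthonormal_tensor htens hξ (hS θ) (hD θ)).tsum_eq]
  ring

/-- For a biphoton state `Φ(θ) = (1-N(θ))^{-1/2} Σₙ rₙ φₙ(θ) ⊗ ξₙ` with
`(ξₙ)` an orthonormal family of the idler space, the state is normalised and its pure-state
quantum Fisher information is
`Q = 4/(1-N) Σₙ |rₙ|² ‖∂φₙ‖² - 4/(1-N)² |Σₙ |rₙ|² ⟨φₙ, ∂φₙ⟩|²`.
The tensor product is encoded abstractly by a bilinear map `tens : H_S → H_I → E` satisfying
the characteristic inner-product identity of the Hilbert tensor product. -/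
theorem biphoton_outgoing_QFI
    {H_S H_I E : Type*}
    [NormedAddCommGroup H_S] [InnerProductSpace ℂ H_S]
    [NormedAddCommGroup H_I] [InnerProductSpace ℂ H_I]
    [NormedAddCommGroup E] [InnerProductSpace ℂ E]
    (tens : H_S →ₗ[ℂ] H_I →ₗ[ℂ] E)
    (htens : ∀ (a : H_S) (b : H_I) (c : H_S) (d : H_I),
      (inner ℂ (tens a b) (tens c d) : ℂ) = (inner ℂ a c : ℂ) * (inner ℂ b d : ℂ))
    (ξ : ℕ → H_I) (hξ : Orthonormal ℂ ξ)
    (r : ℕ → ℂ) (φ φd : ℕ → ℝ → H_S)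
    (hφ : ∀ n t, HasDerivAt (φ n) (φd n t) t)
    (θ : ℝ)
    (hsum : ∀ t, Summable fun n => ‖r n‖ ^ 2 * ‖φ n t‖ ^ 2)
    (N : ℝ → ℝ) (hN : ∀ t, N t = 1 - ∑' n, ‖r n‖ ^ 2 * ‖φ n t‖ ^ 2)
    (hN0 : 0 ≤ N θ) (hN1 : N θ < 1)
    (S D : ℝ → E)
    (hS : ∀ t, HasSum (fun n => r n • tens (φ n t) (ξ n)) (S t))
    (hD : ∀ t, HasSum (fun n => r n • tens (φd n t) (ξ n)) (D t))
    (hSD : ∀ t, HasDerivAt S (D t) t)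
    (Φ : ℝ → E) (hΦ : ∀ t, Φ t = ((Real.sqrt (1 - N t) : ℝ) : ℂ)⁻¹ • S t) :
    ‖Φ θ‖ = 1 ∧
      ∃ Φd : E, HasDerivAt Φ Φd θ ∧
        4 * (‖Φd‖ ^ 2 - ‖(inner ℂ (Φ θ) Φd : ℂ)‖ ^ 2) =
          4 / (1 - N θ) * ∑' n, ‖r n‖ ^ 2 * ‖φd n θ‖ ^ 2
            - 4 / (1 - N θ) ^ 2 *
              ‖(∑' n, ((‖r n‖ ^ 2 : ℝ) : ℂ) * (inner ℂ (φ n θ) (φd n θ) : ℂ))‖ ^ 2 :=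
  biphoton_outgoing_QFI_general tens htens ξ hξ r φ φd θ N hN hN1 S D hS hD hSD Φ hΦ
end

section
/- Let θ ↦ ψ(θ) ∈ ℂ^d be a differentiable family of unit vectors, θ ↦ σ(θ) a differentiable family of d×d positive semidefinite matrices with trace 1, θ ↦ N(θ) ∈ (0,1) differentiable, and let P be a fixed d×d orthogonal projection such that for all θ: Pψ(θ) = 0, P(∂_θψ)(θ) = 0, and Pσ(θ) = σ(θ)P = σ(θ). Set ρ(θ) := (1 − N(θ)) ψ(θ)ψ(θ)* + N(θ) σ(θ). If L and L_σ are Hermitian matrices satisfying the Lyapunov equations Lρ(θ) + ρ(θ)L = 2∂_θρ(θ) and L_σσ(θ) + σ(θ)L_σ = 2∂_θσ(θ), then Tr(ρ(θ)L²) = (∂_θN)²/(N(1−N)) + N·Tr(σ(θ)L_σ²) + (1−N)·4(‖∂_θψ‖² − |⟨ψ, ∂_θψ⟩|²). -/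
/-!
For every solution `L` of `L ρ + ρ L = 2 ρ'` one has `Tr(ρ L²) = Tr(ρ' L)`, and `Tr(ρ' L)` takes
the same value on all solutions. Since `ψψ*` lives in the corner `(1 - P) · (1 - P)` and `σ` in the
corner `P · P`, a solution can be assembled blockwise from the pure-state SLD `2 (ψ'ψ* + ψψ'*)` and
the compression `P L_σ P`, each corrected by a multiple of its corner unit for the moving weights:
`2 (ψ'ψ* + ψψ'*) - N'/(1 - N) (1 - P) + P L_σ P + N'/N P`. On this solution `Tr(ρ' L)` splits
into the two corner contributions, and the weight terms `N'²/(1 - N) + N'²/N` add up to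
`N'²/(N (1 - N))`.
-/

open Matrix ComplexConjugate
open scoped ComplexOrder

def InCorner {A : Type*} [Mul A] (p x : A) : Prop :=
  p * x = x ∧ x * p = x

namespace InCorner

variable {A : Type*} [NonUnitalSemiring A] {p q x y : A}

theorem mul_eq_zero (hx : InCorner p x) (hy : InCorner q y) (hpq : p * q = 0) : x * y = 0 := by
  rw [← hx.2, ← hy.1, mul_assoc, ← mul_assoc p, hpq, zero_mul, mul_zero]

theorem add (hx : InCorner p x) (hy : InCorner p y) : InCorner p (x + y) :=
  ⟨by rw [mul_add, hx.1, hy.1], by rw [add_mul, hx.2, hy.2]⟩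

theorem smul {R : Type*} [SMul R A] [IsScalarTower R A A] [SMulCommClass R A A]
    (hx : InCorner p x) (c : R) : InCorner p (c • x) :=
  ⟨by rw [mul_smul_comm, hx.1], by rw [smul_mul_assoc, hx.2]⟩

theorem of_isIdempotentElem (hp : IsIdempotentElem p) : InCorner p p :=
  ⟨hp, hp⟩

theorem mul_mul (hp : IsIdempotentElem p) (x : A) : InCorner p (p * x * p) :=
  ⟨by rw [← mul_assoc, ← mul_assoc, hp], by rw [mul_assoc, hp]⟩

theorem trace_mul_compress {n R : Type*} [Fintype n] [CommSemiring R] {p D : Matrix n n R}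
    (hD : InCorner p D) (L : Matrix n n R) : (D * (p * L * p)).trace = (D * L).trace := by
  rw [← mul_assoc, trace_mul_cycle, ← mul_assoc, hD.1, hD.2]

end InCorner

theorem inCorner_one_sub_vecMulVec_star {n R : Type*} [Fintype n] [DecidableEq n] [CommRing R]
    [StarRing R] {P : Matrix n n R} (hP : P.IsHermitian) {x y : n → R} (hx : P *ᵥ x = 0) (hy : P *ᵥ y = 0) :
    InCorner (1 - P) (vecMulVec x (star y)) := by
  have hy' : star y ᵥ* P = 0 := by rw [← hP.eq, ← star_mulVec, hy, star_zero]
  exact ⟨by rw [mul_vecMulVec, sub_mulVec, one_mulVec, hx, sub_zero],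
    by rw [vecMulVec_mul, vecMul_sub, vecMul_one, hy', sub_zero]⟩

section SLD

variable {n R 𝕜 : Type*} [Fintype n]

def IsSLD [Semiring R] (ρ D L : Matrix n n R) : Prop :=
  L * ρ + ρ * L = (2 : R) • D

namespace IsSLD

section CommRing

variable [CommRing R] {p q ρ ρ₁ ρ₂ D D₁ D₂ L L₁ L₂ : Matrix n n R}

theorem compress (hρ : InCorner p ρ) (hD : InCorner p D) (h : IsSLD ρ D L) :
    IsSLD ρ D (p * L * p) := by
  have e₁ : p * L * p * ρ = p * (L * ρ) * p := by simp only [mul_assoc, hρ.1, hρ.2]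
  have e₂ : ρ * (p * L * p) = p * (ρ * L) * p := by simp only [← mul_assoc, hρ.1, hρ.2]
  have := congrArg (fun X => p * X * p) h
  simp only [mul_add, add_mul, mul_smul_comm, smul_mul_assoc, hD.1, hD.2] at this
  rw [IsSLD, e₁, e₂, this]

theorem add_of_inCorner (hpq : p * q = 0) (hqp : q * p = 0) (hρ₁ : InCorner p ρ₁)
    (hL₁ : InCorner p L₁) (hρ₂ : InCorner q ρ₂) (hL₂ : InCorner q L₂)
    (h₁ : IsSLD ρ₁ D₁ L₁) (h₂ : IsSLD ρ₂ D₂ L₂) : IsSLD (ρ₁ + ρ₂) (D₁ + D₂) (L₁ + L₂) := by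
  unfold IsSLD at *
  simp only [add_mul, mul_add, hL₁.mul_eq_zero hρ₂ hpq, hρ₂.mul_eq_zero hL₁ hqp,
    hL₂.mul_eq_zero hρ₁ hqp, hρ₁.mul_eq_zero hL₂ hpq, add_zero, zero_add, smul_add, ← h₁, ← h₂]
  abel

end CommRing

section Field

variable [Field 𝕜] {p q ρ ρ₁ ρ₂ D D₁ D₂ L L' L₁ L₂ : Matrix n n 𝕜}

theorem smul (hρ : InCorner p ρ) (h : IsSLD ρ D L) {m : 𝕜} (hm : m ≠ 0) (m' : 𝕜) :
    IsSLD (m • ρ) (m' • ρ + m • D) (L + (m' / m) • p) := by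
  unfold IsSLD at h ⊢
  simp only [add_mul, mul_add, mul_smul_comm, smul_mul_assoc, hρ.1, hρ.2, smul_smul, smul_add,
    mul_div_cancel₀ _ hm, div_mul_cancel₀ _ hm]
  linear_combination (norm := module) m • h

variable [CharZero 𝕜]

theorem trace_mul (h : IsSLD ρ D L) : (ρ * L).trace = D.trace := by
  have := congrArg trace h
  rw [trace_add, trace_mul_comm L, trace_smul, smul_eq_mul] at this
  linear_combination this / 2

theorem trace_mul_mul_self (h : IsSLD ρ D L) : (ρ * L * L).trace = (D * L).trace := by
  have := congrArg (fun X => (X * L).trace) h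
  simp only [add_mul, trace_add, smul_mul_assoc, trace_smul, smul_eq_mul] at this
  rw [mul_assoc L, trace_mul_comm L] at this
  linear_combination this / 2

theorem trace_mul_eq (h : IsSLD ρ D L) (h' : IsSLD ρ D L') :
    (D * L).trace = (D * L').trace := by
  have hL := congrArg (fun X => (X * L').trace) h
  have hL' := congrArg (fun X => (X * L).trace) h'
  simp only [add_mul, trace_add, smul_mul_assoc, trace_smul, smul_eq_mul] at hL hL'
  have h₁ : (L' * ρ * L).trace = (ρ * L * L').trace :=
    (trace_mul_cycle _ _ _).trans (trace_mul_cycle _ _ _)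
  have h₂ : (ρ * L' * L).trace = (L * ρ * L').trace := trace_mul_cycle _ _ _
  rw [h₁, h₂] at hL'
  linear_combination (hL - hL') / 2

theorem trace_smul_add_mul (hρ : InCorner p ρ) (hD : InCorner p D) (hρ₁ : ρ.trace = 1)
    (hD₀ : D.trace = 0) (h : IsSLD ρ D L) (m m' : 𝕜) :
    ((m' • ρ + m • D) * (L + (m' / m) • p)).trace = m' ^ 2 / m + m * (D * L).trace := by
  simp only [add_mul, mul_add, mul_smul_comm, smul_mul_assoc, trace_add, trace_smul, hρ.2, hD.2,
    h.trace_mul, hρ₁, hD₀, smul_eq_mul]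
  ring

theorem trace_add_mul_mul_self (hpq : p * q = 0) (hqp : q * p = 0)
    (hρ₁ : InCorner p ρ₁) (hD₁ : InCorner p D₁) (hL₁ : InCorner p L₁)
    (hρ₂ : InCorner q ρ₂) (hD₂ : InCorner q D₂) (hL₂ : InCorner q L₂)
    (h₁ : IsSLD ρ₁ D₁ L₁) (h₂ : IsSLD ρ₂ D₂ L₂) (h : IsSLD (ρ₁ + ρ₂) (D₁ + D₂) L) :
    ((ρ₁ + ρ₂) * L * L).trace = (D₁ * L₁).trace + (D₂ * L₂).trace := by
  rw [h.trace_mul_mul_self, h.trace_mul_eq (add_of_inCorner hpq hqp hρ₁ hL₁ hρ₂ hL₂ h₁ h₂)]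
  simp only [add_mul, mul_add, hD₁.mul_eq_zero hL₂ hpq, hD₂.mul_eq_zero hL₁ hqp, trace_add,
    add_zero, zero_add]

theorem trace_mul_mul_self_mixture [DecidableEq n] (hp : IsIdempotentElem p)
    (hρ₁ : InCorner (1 - p) ρ₁) (hD₁ : InCorner (1 - p) D₁) (hL₁ : InCorner (1 - p) L₁)
    (hρ₂ : InCorner p ρ₂) (hD₂ : InCorner p D₂) (hL₂ : InCorner p L₂)
    (htr₁ : ρ₁.trace = 1) (htrD₁ : D₁.trace = 0) (htr₂ : ρ₂.trace = 1) (htrD₂ : D₂.trace = 0)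
    (h₁ : IsSLD ρ₁ D₁ L₁) (h₂ : IsSLD ρ₂ D₂ L₂) {m₁ m₂ : 𝕜} (hm₁ : m₁ ≠ 0) (hm₂ : m₂ ≠ 0)
    (hm : m₁ + m₂ = 1) (m' : 𝕜)
    (h : IsSLD (m₁ • ρ₁ + m₂ • ρ₂) ((-m') • ρ₁ + m₁ • D₁ + (m' • ρ₂ + m₂ • D₂)) L) :
    ((m₁ • ρ₁ + m₂ • ρ₂) * L * L).trace =
      m' ^ 2 / (m₂ * m₁) + m₂ * (D₂ * L₂).trace + m₁ * (D₁ * L₁).trace := by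
  have hq := InCorner.of_isIdempotentElem hp.one_sub
  have h₁' := h₁.smul hρ₁ hm₁ (-m')
  have h₂' := h₂.smul hρ₂ hm₂ m'
  have key := IsSLD.trace_add_mul_mul_self hp.one_sub_mul_self hp.mul_one_sub_self (hρ₁.smul m₁)
    ((hρ₁.smul (-m')).add (hD₁.smul m₁)) (hL₁.add (hq.smul (-m' / m₁))) (hρ₂.smul m₂)
    ((hρ₂.smul m').add (hD₂.smul m₂)) (hL₂.add ((InCorner.of_isIdempotentElem hp).smul (m' / m₂)))
    h₁' h₂' h
  rw [key, trace_smul_add_mul hρ₁ hD₁ htr₁ htrD₁ h₁, trace_smul_add_mul hρ₂ hD₂ htr₂ htrD₂ h₂]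
  field_simp
  linear_combination m' ^ 2 * hm

end Field

end IsSLD

section PureState

variable [CommRing R] {x x' y y' : n → R}

theorem isSLD_vecMulVec (hxy : x ⬝ᵥ y = 1) (hxy' : x' ⬝ᵥ y + x ⬝ᵥ y' = 0) :
    IsSLD (vecMulVec x y) (vecMulVec x' y + vecMulVec x y')
      ((2 : R) • (vecMulVec x' y + vecMulVec x y')) := by
  rw [dotProduct_comm] at hxy
  rw [dotProduct_comm x', dotProduct_comm x] at hxy'
  simp only [IsSLD, add_mul, mul_add, smul_mul_assoc, mul_smul_comm, vecMulVec_mul_vecMulVec,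
    vecMulVec_smul, hxy, one_smul]
  linear_combination (norm := module) (2 : R) • hxy' • vecMulVec x y

theorem trace_vecMulVec_add_mul_two_smul (hxy : x ⬝ᵥ y = 1) (hxy' : x' ⬝ᵥ y + x ⬝ᵥ y' = 0) :
    ((vecMulVec x' y + vecMulVec x y') * ((2 : R) • (vecMulVec x' y + vecMulVec x y'))).trace =
      4 * (x' ⬝ᵥ y' - (x' ⬝ᵥ y) * (x ⬝ᵥ y')) := by
  simp only [add_mul, mul_add, mul_smul_comm, vecMulVec_mul_vecMulVec, trace_add, trace_smul,
    trace_vecMulVec, dotProduct_smul, smul_eq_mul]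
  rw [dotProduct_comm y x, dotProduct_comm y x', dotProduct_comm y' x', dotProduct_comm y' x, hxy]
  linear_combination (2 * (x' ⬝ᵥ y + x ⬝ᵥ y')) * hxy'

end PureState

end SLD

theorem inner_add_inner_eq_zero_of_norm_eq {𝕜 E : Type*} [RCLike 𝕜] [NormedAddCommGroup E]
    [InnerProductSpace 𝕜 E] [NormedSpace ℝ E] {ψ : ℝ → E} {ψ' : E} {θ r : ℝ} (hψ : ∀ t, ‖ψ t‖ = r)
    (hψ' : HasDerivAt ψ ψ' θ) : inner 𝕜 (ψ θ) ψ' + inner 𝕜 ψ' (ψ θ) = 0 := by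
  have h := hψ'.inner 𝕜 hψ'
  simp only [inner_self_eq_norm_sq_to_K, hψ] at h
  exact h.unique (hasDerivAt_const θ _)

section EuclideanSpace

variable {n : Type*} [Fintype n] {ψ ψ' : EuclideanSpace ℂ n}

theorem ofLp_dotProduct_star_ofLp_self (hψ : ‖ψ‖ = 1) : ψ.ofLp ⬝ᵥ star ψ.ofLp = 1 := by
  rw [← EuclideanSpace.inner_eq_star_dotProduct, inner_self_eq_norm_sq_to_K, hψ]
  norm_num

theorem trace_vecMulVec_add_mul_two_smul_eq_norm (hψ : ‖ψ‖ = 1)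
    (hψψ' : inner ℂ ψ ψ' + inner ℂ ψ' ψ = 0) :
    ((vecMulVec ψ'.ofLp (star ψ.ofLp) + vecMulVec ψ.ofLp (star ψ'.ofLp)) *
        ((2 : ℂ) • (vecMulVec ψ'.ofLp (star ψ.ofLp) + vecMulVec ψ.ofLp (star ψ'.ofLp)))).trace =
      ((4 * (‖ψ'‖ ^ 2 - ‖inner ℂ ψ ψ'‖ ^ 2) : ℝ) : ℂ) := by
  have habs : inner ℂ ψ ψ' * inner ℂ ψ' ψ = (‖inner ℂ ψ ψ'‖ : ℂ) ^ 2 := by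
    rw [← Complex.mul_conj', inner_conj_symm]
  rw [trace_vecMulVec_add_mul_two_smul (x' := ψ'.ofLp) (y' := star ψ'.ofLp)
    (ofLp_dotProduct_star_ofLp_self hψ) hψψ',
    ← EuclideanSpace.inner_eq_star_dotProduct, ← EuclideanSpace.inner_eq_star_dotProduct,
    ← EuclideanSpace.inner_eq_star_dotProduct, inner_self_eq_norm_sq_to_K, habs,
    RCLike.ofReal_eq_complex_ofReal]
  push_cast
  ring

end EuclideanSpace

section EntrywiseDeriv

variable {n : Type*} {σ : ℝ → Matrix n n ℂ} {σ' : Matrix n n ℂ} {θ : ℝ}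

theorem trace_eq_zero_of_hasDerivAt [Fintype n] {c : ℂ} (hσ : ∀ t, (σ t).trace = c)
    (hσ' : ∀ i j, HasDerivAt (fun t => σ t i j) (σ' i j) θ) : σ'.trace = 0 := by
  have h : HasDerivAt (fun t => (σ t).trace) σ'.trace θ :=
    HasDerivAt.fun_sum fun i _ => hσ' i i
  simp only [hσ] at h
  exact h.unique (hasDerivAt_const θ c)

theorem hasDerivAt_mul_mul_apply [Fintype n] (A B : Matrix n n ℂ)
    (hσ' : ∀ i j, HasDerivAt (fun t => σ t i j) (σ' i j) θ) (i j : n) :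
    HasDerivAt (fun t => (A * σ t * B) i j) ((A * σ' * B) i j) θ := by
  simp only [mul_apply, Finset.sum_mul]
  exact HasDerivAt.fun_sum fun k _ => HasDerivAt.fun_sum fun l _ =>
    ((hσ' l k).const_mul _).mul_const _

theorem InCorner.of_hasDerivAt [Fintype n] [DecidableEq n] {P : Matrix n n ℂ}
    (hσ : ∀ t, InCorner P (σ t)) (hσ' : ∀ i j, HasDerivAt (fun t => σ t i j) (σ' i j) θ) : InCorner P σ' := by
  constructor <;> ext i j
  · have h := hasDerivAt_mul_mul_apply P 1 hσ' i j
    simp only [mul_one, (hσ _).1] at h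
    exact h.unique (hσ' i j)
  · have h := hasDerivAt_mul_mul_apply 1 P hσ' i j
    simp only [one_mul, (hσ _).2] at h
    exact h.unique (hσ' i j)

theorem hasDerivAt_mixture_apply {x : ℝ → n → ℂ} {x' : n → ℂ} {N : ℝ → ℝ} {N' : ℝ}
    (hx : HasDerivAt x x' θ) (hσ' : ∀ i j, HasDerivAt (fun t => σ t i j) (σ' i j) θ)
    (hN : HasDerivAt N N' θ) (i j : n) :
    HasDerivAt
      (fun t => (((1 - N t : ℝ) : ℂ) • vecMulVec (x t) (star (x t)) + ((N t : ℝ) : ℂ) • σ t) i j)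
      (((-(N' : ℂ)) • vecMulVec (x θ) (star (x θ))
          + ((1 - N θ : ℝ) : ℂ) • (vecMulVec x' (star (x θ)) + vecMulVec (x θ) (star x'))
          + ((N' : ℂ) • σ θ + ((N θ : ℝ) : ℂ) • σ')) i j) θ := by
  have hxi : HasDerivAt (fun t => x t i) (x' i) θ := hasDerivAt_pi.1 hx i
  have hxj : HasDerivAt (fun t => star (x t j)) (star (x' j)) θ := (hasDerivAt_pi.1 hx j).star
  have hM : HasDerivAt (fun t => ((1 - N t : ℝ) : ℂ)) ((-N' : ℝ) : ℂ) θ :=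
    ((hasDerivAt_const θ 1).sub hN).ofReal_comp.congr_deriv (by simp)
  have := (hM.fun_mul (hxi.fun_mul hxj)).fun_add (hN.ofReal_comp.fun_mul (hσ' i j))
  refine this.congr_deriv ?_
  simp only [Matrix.add_apply, Matrix.smul_apply, vecMulVec_apply, Pi.star_apply, smul_eq_mul]
  push_cast
  ring

end EntrywiseDeriv

theorem QFI_three_term_decomposition_general
    {d : ℕ}
    (ψ : ℝ → EuclideanSpace ℂ (Fin d)) (ψd : EuclideanSpace ℂ (Fin d))
    (θ : ℝ)
    (hψunit : ∀ t, ‖ψ t‖ = 1)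
    (hψd : HasDerivAt ψ ψd θ)
    (σ : ℝ → Matrix (Fin d) (Fin d) ℂ)
    (hσtr : ∀ t, (σ t).trace = 1)
    (σ' : Matrix (Fin d) (Fin d) ℂ)
    (hσ' : ∀ i j, HasDerivAt (fun t => σ t i j) (σ' i j) θ)
    (N : ℝ → ℝ) (hN : ∀ t, N t ∈ Set.Ioo (0 : ℝ) 1)
    (N' : ℝ) (hN' : HasDerivAt N N' θ)
    (P : Matrix (Fin d) (Fin d) ℂ) (hPH : P.IsHermitian) (hPproj : P * P = P)
    (hPψ : ∀ t, P.mulVec (fun i => ψ t i) = 0)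
    (hPψd : P.mulVec (fun i => ψd i) = 0)
    (hPσ : ∀ t, P * σ t = σ t ∧ σ t * P = σ t)
    (ρ : ℝ → Matrix (Fin d) (Fin d) ℂ)
    (hρ : ∀ t, ρ t =
      ((1 - N t : ℝ) : ℂ) • Matrix.vecMulVec (fun i => ψ t i) (fun j => conj (ψ t j))
        + ((N t : ℝ) : ℂ) • σ t)
    (ρ' : Matrix (Fin d) (Fin d) ℂ)
    (hρ' : ∀ i j, HasDerivAt (fun t => ρ t i j) (ρ' i j) θ)
    (L Lσ : Matrix (Fin d) (Fin d) ℂ)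
    (hLyap : L * ρ θ + ρ θ * L = (2 : ℂ) • ρ')
    (hLyapσ : Lσ * σ θ + σ θ * Lσ = (2 : ℂ) • σ') :
    (ρ θ * L * L).trace =
      ((N' ^ 2 / (N θ * (1 - N θ)) : ℝ) : ℂ)
        + ((N θ : ℝ) : ℂ) * (σ θ * Lσ * Lσ).trace
        + ((1 - N θ : ℝ) : ℂ) *
            ((4 * (‖ψd‖ ^ 2 - ‖(inner ℂ (ψ θ) ψd : ℂ)‖ ^ 2) : ℝ) : ℂ) := by
  set u := WithLp.ofLp (ψ θ)
  set v := WithLp.ofLp ψd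
  have hunit : u ⬝ᵥ star u = 1 := ofLp_dotProduct_star_ofLp_self (hψunit θ)
  have horth : v ⬝ᵥ star u + u ⬝ᵥ star v = 0 := inner_add_inner_eq_zero_of_norm_eq hψunit hψd
  have hσ'P : InCorner P σ' := InCorner.of_hasDerivAt hPσ hσ'
  have hρ'eq : ρ' = (-(N' : ℂ)) • vecMulVec u (star u)
      + ((1 - N θ : ℝ) : ℂ) • (vecMulVec v (star u) + vecMulVec u (star v))
      + ((N' : ℂ) • σ θ + ((N θ : ℝ) : ℂ) • σ') := by
    ext i j
    refine (hρ' i j).unique ?_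
    simp only [hρ]
    exact hasDerivAt_mixture_apply ((PiLp.hasFDerivAt_ofLp 2 (ψ θ)).comp_hasDerivAt θ hψd) hσ'
      hN' i j
  have hD₀ := (inCorner_one_sub_vecMulVec_star (x := v) (y := u) hPH hPψd (hPψ θ)).add
    (inCorner_one_sub_vecMulVec_star (x := u) (y := v) hPH (hPψ θ) hPψd)
  have key := IsSLD.trace_mul_mul_self_mixture hPproj
    (inCorner_one_sub_vecMulVec_star hPH (hPψ θ) (hPψ θ)) hD₀ (hD₀.smul 2) (hPσ θ) hσ'P
    (InCorner.mul_mul hPproj Lσ) (by rw [trace_vecMulVec, hunit])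
    (by rw [trace_add, trace_vecMulVec, trace_vecMulVec, horth]) (hσtr θ)
    (trace_eq_zero_of_hasDerivAt hσtr hσ') (isSLD_vecMulVec hunit horth)
    (IsSLD.compress (hPσ θ) hσ'P hLyapσ) (m₁ := ((1 - N θ : ℝ) : ℂ)) (m₂ := ((N θ : ℝ) : ℂ))
    (by exact_mod_cast (sub_pos.2 (hN θ).2).ne') (by exact_mod_cast (hN θ).1.ne')
    (by push_cast; ring) (N' : ℂ) (hρ θ ▸ hρ'eq ▸ hLyap)
  rw [hρ θ]
  refine key.trans ?_
  rw [trace_vecMulVec_add_mul_two_smul_eq_norm (hψunit θ) horth, hσ'P.trace_mul_compress,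
    IsSLD.trace_mul_mul_self hLyapσ]
  push_cast
  field_simp

/-- Three-term decomposition of the quantum Fisher information of
`ρ(θ) = (1-N(θ)) ψψ* + N(θ) σ(θ)` where the pure part `ψ` and the mixed part `σ` live in
mutually orthogonal subspaces (enforced by a projection `P`):
`Tr(ρL²) = (∂N)²/(N(1-N)) + N·Tr(σ Lσ²) + (1-N)·4(‖∂ψ‖² - |⟨ψ,∂ψ⟩|²)`. -/
theorem QFI_three_term_decomposition
    {d : ℕ}
    (ψ : ℝ → EuclideanSpace ℂ (Fin d)) (ψd : EuclideanSpace ℂ (Fin d))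
    (θ : ℝ)
    (hψunit : ∀ t, ‖ψ t‖ = 1)
    (hψdiff : ∀ t, DifferentiableAt ℝ ψ t)
    (hψd : HasDerivAt ψ ψd θ)
    (σ : ℝ → Matrix (Fin d) (Fin d) ℂ)
    (hσpsd : ∀ t, (σ t).PosSemidef) (hσtr : ∀ t, (σ t).trace = 1)
    (σ' : Matrix (Fin d) (Fin d) ℂ)
    (hσdiff : ∀ t i j, DifferentiableAt ℝ (fun u => σ u i j) t)
    (hσ' : ∀ i j, HasDerivAt (fun t => σ t i j) (σ' i j) θ)
    (N : ℝ → ℝ) (hN : ∀ t, N t ∈ Set.Ioo (0 : ℝ) 1)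
    (hNdiff : ∀ t, DifferentiableAt ℝ N t)
    (N' : ℝ) (hN' : HasDerivAt N N' θ)
    (P : Matrix (Fin d) (Fin d) ℂ) (hPH : P.IsHermitian) (hPproj : P * P = P)
    (hPψ : ∀ t, P.mulVec (fun i => ψ t i) = 0)
    (hPψd : P.mulVec (fun i => ψd i) = 0)
    (hPσ : ∀ t, P * σ t = σ t ∧ σ t * P = σ t)
    (ρ : ℝ → Matrix (Fin d) (Fin d) ℂ)
    (hρ : ∀ t, ρ t =
      ((1 - N t : ℝ) : ℂ) • Matrix.vecMulVec (fun i => ψ t i) (fun j => conj (ψ t j))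
        + ((N t : ℝ) : ℂ) • σ t)
    (ρ' : Matrix (Fin d) (Fin d) ℂ)
    (hρ' : ∀ i j, HasDerivAt (fun t => ρ t i j) (ρ' i j) θ)
    (L Lσ : Matrix (Fin d) (Fin d) ℂ)
    (hL : L.IsHermitian) (hLσ : Lσ.IsHermitian)
    (hLyap : L * ρ θ + ρ θ * L = (2 : ℂ) • ρ')
    (hLyapσ : Lσ * σ θ + σ θ * Lσ = (2 : ℂ) • σ') :
    (ρ θ * L * L).trace =
      ((N' ^ 2 / (N θ * (1 - N θ)) : ℝ) : ℂ)
        + ((N θ : ℝ) : ℂ) * (σ θ * Lσ * Lσ).trace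
        + ((1 - N θ : ℝ) : ℂ) *
            ((4 * (‖ψd‖ ^ 2 - ‖(inner ℂ (ψ θ) ψd : ℂ)‖ ^ 2) : ℝ) : ℂ) :=
  QFI_three_term_decomposition_general ψ ψd θ hψunit hψd σ hσtr σ' hσ' N hN N' hN' P hPH hPproj hPψ
    hPψd hPσ ρ hρ ρ' hρ' L Lσ hLyap hLyapσ
end

section
/- Let e_1, …, e_k be the standard orthonormal basis of ℂ^k, let p_x : ℝ → (0,1) be differentiable with Σ_{x=1}^k p_x(θ) = 1, and let ζ_x : ℝ → ℂ^d be differentiable families of unit vectors. Define the classical–quantum state ρ(θ) := Σ_{x=1}^k p_x(θ) ζ_x(θ)ζ_x(θ)* ⊗ e_x e_x* on ℂ^d ⊗ ℂ^k. If L is a Hermitian matrix with Lρ(θ) + ρ(θ)L = 2∂_θρ(θ), then Tr(ρ(θ)L²) = Σ_x (∂_θp_x)²/p_x + Σ_x p_x · 4(‖∂_θζ_x‖² − |⟨ζ_x, ∂_θζ_x⟩|²). -/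
/-!
Write `vₓ = ζₓ ⊗ eₓ` and `v'ₓ = ζ'ₓ ⊗ eₓ`. The `vₓ` are orthonormal, `ρ = Σ pₓ vₓvₓ*`, and
`∂ρ = Σ p'ₓ vₓvₓ* + pₓ (v'ₓvₓ* + vₓv'ₓ*)`, where the flags make `v'_y ⟂ vₓ` for `x ≠ y`.
Applying `Lρ + ρL = 2∂ρ` to `v_y` and pairing with `vₓ` gives
`(pₓ + p_y) ⟨vₓ, L v_y⟩ = 2 ⟨vₓ, ∂ρ v_y⟩`, which vanishes for `x ≠ y` and is `2 p'_y` for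
`x = y`, because `⟨ζ_y, ζ'_y⟩` is purely imaginary (`‖ζ_y‖` is constant). Hence
`L v_y = (p'_y / p_y - 2 ⟨v_y, v'_y⟩) v_y + 2 v'_y`, and for Hermitian `L`,
`Tr(ρL²) = Σ p_y ‖L v_y‖²` expands to the claimed sum.
-/

open ComplexConjugate
open scoped Kronecker

open Matrix

noncomputable def outerSum {n ι : Type*} [Fintype ι] (c : ι → ℝ) (u w : ι → n → ℂ) :
    Matrix n n ℂ :=
  ∑ x, (c x : ℂ) • vecMulVec (u x) (star (w x))

/-- The derivative of `outerSum c u u` by the product rule, given derivatives `c'` and `u'`. -/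
noncomputable def outerSumDeriv {n ι : Type*} [Fintype ι] (c c' : ι → ℝ) (u u' : ι → n → ℂ) :
    Matrix n n ℂ :=
  outerSum c' u u + outerSum c u' u + outerSum c u u'

section
variable {n ι : Type*} [Fintype ι]

theorem hasDerivAt_outerSum_apply {c : ι → ℝ → ℝ} {c' : ι → ℝ} {u : ι → ℝ → n → ℂ}
    {u' : ι → n → ℂ} {θ : ℝ} (hc : ∀ x, HasDerivAt (c x) (c' x) θ)
    (hu : ∀ x a, HasDerivAt (fun t => u x t a) (u' x a) θ) (a b : n) :
    HasDerivAt (fun t => outerSum (c · t) (u · t) (u · t) a b)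
      (outerSumDeriv (c · θ) c' (u · θ) u' a b) θ := by
  simp only [outerSumDeriv, outerSum, Matrix.add_apply, Matrix.sum_apply, Matrix.smul_apply,
    vecMulVec_apply, Pi.star_apply, smul_eq_mul, ← Finset.sum_add_distrib]
  exact (HasDerivAt.fun_sum fun x _ =>
    (hc x).ofReal_comp.fun_mul ((hu x a).fun_mul (hu x b).star)).congr_deriv
    (Finset.sum_congr rfl fun x _ => by ring)

variable [Fintype n]

theorem outerSum_mulVec (c : ι → ℝ) (u w : ι → n → ℂ) (z : n → ℂ) :
    outerSum c u w *ᵥ z = ∑ x, ((c x : ℂ) * (star (w x) ⬝ᵥ z)) • u x := by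
  simp only [outerSum, sum_mulVec, smul_mulVec, vecMulVec_mulVec, op_smul_eq_smul, smul_smul]

theorem trace_outerSum_mul_mul (c : ι → ℝ) (v : ι → n → ℂ) {L : Matrix n n ℂ}
    (hL : L.IsHermitian) :
    trace (outerSum c v v * L * L) = ∑ x, (c x : ℂ) * (star (L *ᵥ v x) ⬝ᵥ L *ᵥ v x) := by
  simp only [outerSum, Finset.sum_mul, trace_sum, smul_mul, trace_smul, smul_eq_mul]
  refine Finset.sum_congr rfl fun x _ => ?_
  rw [Matrix.mul_assoc, trace_mul_comm, mul_vecMulVec, trace_vecMulVec, dotProduct_comm,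
    ← mulVec_mulVec, dotProduct_mulVec, star_mulVec, hL.eq]

theorem star_smul_add_smul_dotProduct_self {u u' : n → ℂ} (hu : star u ⬝ᵥ u = 1)
    (hc : star (star u ⬝ᵥ u') = -(star u ⬝ᵥ u')) (r : ℝ) :
    let w := ((r : ℂ) - 2 * (star u ⬝ᵥ u')) • u + (2 : ℂ) • u'
    star w ⬝ᵥ w = r ^ 2 + 4 * (star u' ⬝ᵥ u' - ‖star u ⬝ᵥ u'‖ ^ 2) := by
  have hu'u : star u' ⬝ᵥ u = -(star u ⬝ᵥ u') := by rw [star_dotProduct, hc]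
  have hnorm : (‖star u ⬝ᵥ u'‖ : ℂ) ^ 2 = -(star u ⬝ᵥ u') ^ 2 := by
    rw [← Complex.mul_conj', ← Complex.star_def, hc]; ring
  simp only [star_add, star_smul, add_dotProduct, dotProduct_add, smul_dotProduct,
    dotProduct_smul, smul_eq_mul, hu, hu'u, hnorm, star_sub, star_mul', star_ofNat, hc,
    show star (r : ℂ) = r from Complex.conj_ofReal r]
  ring

variable [DecidableEq ι]

theorem outerSum_mulVec_of_orthonormal (c : ι → ℝ) (u : ι → n → ℂ) {v : ι → n → ℂ}
    (hv : ∀ x y, star (v x) ⬝ᵥ v y = if x = y then 1 else 0) (y : ι) :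
    outerSum c u v *ᵥ v y = (c y : ℂ) • u y := by
  simp [outerSum_mulVec, hv]

theorem lyapunov_mulVec {p : ι → ℝ} {v : ι → n → ℂ}
    (hv : ∀ x y, star (v x) ⬝ᵥ v y = if x = y then 1 else 0) {L ρ' : Matrix n n ℂ}
    (hLyap : L * outerSum p v v + outerSum p v v * L = (2 : ℂ) • ρ') (y : ι) :
    (p y : ℂ) • (L *ᵥ v y) + ∑ x, ((p x : ℂ) * (star (v x) ⬝ᵥ L *ᵥ v y)) • v x
      = (2 : ℂ) • (ρ' *ᵥ v y) := by
  have h := congrArg (· *ᵥ v y) hLyap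
  simp only [add_mulVec, ← mulVec_mulVec, outerSum_mulVec_of_orthonormal _ _ hv, mulVec_smul,
    smul_mulVec] at h
  rw [← h, outerSum_mulVec]

theorem lyapunov_dotProduct {p : ι → ℝ} {v : ι → n → ℂ}
    (hv : ∀ x y, star (v x) ⬝ᵥ v y = if x = y then 1 else 0) {L ρ' : Matrix n n ℂ}
    (hLyap : L * outerSum p v v + outerSum p v v * L = (2 : ℂ) • ρ') (x y : ι) :
    ((p y : ℂ) + p x) * (star (v x) ⬝ᵥ L *ᵥ v y) = 2 * (star (v x) ⬝ᵥ ρ' *ᵥ v y) := by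
  have h := congrArg (star (v x) ⬝ᵥ ·) (lyapunov_mulVec hv hLyap y)
  simp only [dotProduct_add, dotProduct_smul, dotProduct_sum, hv, smul_eq_mul] at h
  simpa [add_mul] using h

theorem outerSumDeriv_mulVec (p p' : ι → ℝ) {v v' : ι → n → ℂ}
    (hv : ∀ x y, star (v x) ⬝ᵥ v y = if x = y then 1 else 0)
    (hv' : ∀ x y, x ≠ y → star (v x) ⬝ᵥ v' y = 0) (y : ι) :
    outerSumDeriv p p' v v' *ᵥ v y
      = ((p' y : ℂ) + p y * star (star (v y) ⬝ᵥ v' y)) • v y + (p y : ℂ) • v' y := by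
  have hstar : ∀ x, star (v' x) ⬝ᵥ v y = if x = y then star (star (v y) ⬝ᵥ v' y) else 0 := by
    intro x
    rw [star_dotProduct]
    split_ifs with h
    · rw [h]
    · rw [hv' y x (Ne.symm h), star_zero]
  simp only [outerSumDeriv, add_mulVec, outerSum_mulVec_of_orthonormal _ _ hv, outerSum_mulVec,
    hstar, mul_ite, mul_zero, ite_smul, zero_smul, Finset.sum_ite_eq', Finset.mem_univ, if_true]
  module

theorem star_dotProduct_mulVec_of_lyapunov {p p' : ι → ℝ} (hp : ∀ x, 0 < p x)
    {v v' : ι → n → ℂ} (hv : ∀ x y, star (v x) ⬝ᵥ v y = if x = y then 1 else 0)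
    (hv' : ∀ x y, x ≠ y → star (v x) ⬝ᵥ v' y = 0)
    (hc : ∀ x, star (star (v x) ⬝ᵥ v' x) = -(star (v x) ⬝ᵥ v' x)) {L : Matrix n n ℂ}
    (hLyap : L * outerSum p v v + outerSum p v v * L = (2 : ℂ) • outerSumDeriv p p' v v')
    (x y : ι) :
    star (v x) ⬝ᵥ L *ᵥ v y = if x = y then ((p' y / p y : ℝ) : ℂ) else 0 := by
  have h := lyapunov_dotProduct hv hLyap x y
  rw [outerSumDeriv_mulVec p p' hv hv', dotProduct_add, dotProduct_smul, dotProduct_smul, hv] at h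
  split_ifs at h ⊢ with hxy
  · subst hxy
    rw [hc, smul_eq_mul, smul_eq_mul] at h
    push_cast
    rw [eq_div_iff (Complex.ofReal_ne_zero.mpr (hp x).ne')]
    linear_combination h / 2
  · have hpos : (p y : ℂ) + p x ≠ 0 := by exact_mod_cast (add_pos (hp y) (hp x)).ne'
    rw [hv' x y hxy] at h
    simpa [hpos] using h

theorem mulVec_eq_of_lyapunov {p p' : ι → ℝ} (hp : ∀ x, 0 < p x) {v v' : ι → n → ℂ}
    (hv : ∀ x y, star (v x) ⬝ᵥ v y = if x = y then 1 else 0)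
    (hv' : ∀ x y, x ≠ y → star (v x) ⬝ᵥ v' y = 0)
    (hc : ∀ x, star (star (v x) ⬝ᵥ v' x) = -(star (v x) ⬝ᵥ v' x)) {L : Matrix n n ℂ}
    (hLyap : L * outerSum p v v + outerSum p v v * L = (2 : ℂ) • outerSumDeriv p p' v v')
    (y : ι) :
    L *ᵥ v y = ((p' y / p y : ℝ) - 2 * (star (v y) ⬝ᵥ v' y) : ℂ) • v y + (2 : ℂ) • v' y := by
  have hp0 : (p y : ℂ) ≠ 0 := Complex.ofReal_ne_zero.mpr (hp y).ne'
  have h := lyapunov_mulVec hv hLyap y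
  simp only [star_dotProduct_mulVec_of_lyapunov hp hv hv' hc hLyap, mul_ite, mul_zero, ite_smul,
    zero_smul, Finset.sum_ite_eq', Finset.mem_univ, if_true, outerSumDeriv_mulVec p p' hv hv',
    hc] at h
  have hr : (p y : ℂ) * ((p' y / p y : ℝ) : ℂ) = p' y := by
    push_cast; field_simp
  generalize ((p' y / p y : ℝ) : ℂ) = r at h hr ⊢
  apply smul_right_injective _ hp0
  linear_combination (norm := module) h - (2 : ℂ) • hr • v y

theorem trace_outerSum_mul_mul_of_lyapunov {p p' : ι → ℝ} (hp : ∀ x, 0 < p x)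
    {v v' : ι → n → ℂ} (hv : ∀ x y, star (v x) ⬝ᵥ v y = if x = y then 1 else 0)
    (hv' : ∀ x y, x ≠ y → star (v x) ⬝ᵥ v' y = 0)
    (hc : ∀ x, star (star (v x) ⬝ᵥ v' x) = -(star (v x) ⬝ᵥ v' x)) {L : Matrix n n ℂ}
    (hL : L.IsHermitian)
    (hLyap : L * outerSum p v v + outerSum p v v * L = (2 : ℂ) • outerSumDeriv p p' v v') :
    trace (outerSum p v v * L * L) = ∑ x, ((p' x ^ 2 / p x : ℝ) : ℂ)
      + ∑ x, (p x : ℂ) * (4 * (star (v' x) ⬝ᵥ v' x - ‖star (v x) ⬝ᵥ v' x‖ ^ 2)) := by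
  rw [trace_outerSum_mul_mul _ _ hL, ← Finset.sum_add_distrib]
  refine Finset.sum_congr rfl fun x _ => ?_
  have hp0 : (p x : ℂ) ≠ 0 := Complex.ofReal_ne_zero.mpr (hp x).ne'
  rw [mulVec_eq_of_lyapunov hp hv hv' hc hLyap,
    star_smul_add_smul_dotProduct_self (by simpa using hv x x) (hc x)]
  push_cast
  field_simp

end

section
variable {m ι : Type*} [DecidableEq ι]

/-- The vector `ζ ⊗ eₓ`. -/
def flagged (ζ : m → ℂ) (x : ι) : m × ι → ℂ := fun a => if a.2 = x then ζ a.1 else 0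

theorem kronecker_single_eq_vecMulVec_flagged (ζ η : m → ℂ) (x : ι) :
    vecMulVec ζ (fun j => conj (η j)) ⊗ₖ single x x (1 : ℂ)
      = vecMulVec (flagged ζ x) (star (flagged η x)) := by
  ext ⟨i, y⟩ ⟨j, z⟩
  by_cases hy : y = x <;> by_cases hz : z = x <;>
    simp [flagged, vecMulVec_apply, eq_comm (a := x), hy, hz]

theorem star_flagged_dotProduct_flagged [Fintype m] [Fintype ι] (ζ η : m → ℂ) (x y : ι) :
    star (flagged ζ x) ⬝ᵥ flagged η y = if x = y then star ζ ⬝ᵥ η else 0 := by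
  simp only [dotProduct, Fintype.sum_prod_type, flagged, Pi.star_apply]
  split_ifs with h
  · subst h; simp
  · simp [Ne.symm h]

theorem hasDerivAt_flagged_apply {ζ : ℝ → m → ℂ} {ζ' : m → ℂ} {θ : ℝ}
    (hζ : ∀ i, HasDerivAt (ζ · i) (ζ' i) θ) (x : ι) (a : m × ι) :
    HasDerivAt (fun t => flagged (ζ t) x a) (flagged ζ' x a) θ := by
  unfold flagged
  split_ifs
  exacts [hζ a.1, hasDerivAt_const θ 0]

end

theorem hasDerivAt_euclideanSpace_apply {m : Type*} [Fintype m] {ζ : ℝ → EuclideanSpace ℂ m}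
    {ζ' : EuclideanSpace ℂ m} {θ : ℝ} (hζ : HasDerivAt ζ ζ' θ) (i : m) :
    HasDerivAt (ζ · i) (ζ' i) θ :=
  (PiLp.hasFDerivAt_apply (𝕜 := ℝ) 2 (ζ θ) i).comp_hasDerivAt θ hζ

theorem star_dotProduct_ofLp {m : Type*} [Fintype m] (η η' : EuclideanSpace ℂ m) :
    star η.ofLp ⬝ᵥ η'.ofLp = inner ℂ η η' := by
  rw [EuclideanSpace.inner_eq_star_dotProduct, dotProduct_comm]

theorem star_inner_eq_neg_of_norm_const {E : Type*} [NormedAddCommGroup E]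
    [InnerProductSpace ℂ E] {f : ℝ → E} {f' : E} {θ r : ℝ} (hf : ∀ t, ‖f t‖ = r)
    (hd : HasDerivAt f f' θ) :
    star (inner ℂ (f θ) f') = -inner ℂ (f θ) f' := by
  have hconst : (fun t => inner ℂ (f t) (f t)) = fun _ => ((r : ℂ) ^ 2) := by
    funext t; simp [inner_self_eq_norm_sq_to_K, hf t]
  have h := hd.inner ℂ hd
  rw [hconst] at h
  have h0 := h.unique (hasDerivAt_const θ _)
  rw [← inner_conj_symm f' (f θ)] at h0
  show conj _ = _
  linear_combination h0

theorem cq_state_QFI_general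
    {d k : ℕ}
    (p : Fin k → ℝ → ℝ) (p' : Fin k → ℝ)
    (θ : ℝ)
    (hp01 : ∀ x t, p x t ∈ Set.Ioo (0 : ℝ) 1)
    (hp' : ∀ x, HasDerivAt (p x) (p' x) θ)
    (ζ : Fin k → ℝ → EuclideanSpace ℂ (Fin d)) (ζ' : Fin k → EuclideanSpace ℂ (Fin d))
    (hζunit : ∀ x t, ‖ζ x t‖ = 1)
    (hζ' : ∀ x, HasDerivAt (ζ x) (ζ' x) θ)
    (ρ : ℝ → Matrix (Fin d × Fin k) (Fin d × Fin k) ℂ)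
    (hρ : ∀ t, ρ t = ∑ x, ((p x t : ℝ) : ℂ) •
      (Matrix.vecMulVec (fun i => ζ x t i) (fun j => conj (ζ x t j)) ⊗ₖ
        Matrix.single x x (1 : ℂ)))
    (ρ' : Matrix (Fin d × Fin k) (Fin d × Fin k) ℂ)
    (hρ' : ∀ a b, HasDerivAt (fun t => ρ t a b) (ρ' a b) θ)
    (L : Matrix (Fin d × Fin k) (Fin d × Fin k) ℂ)
    (hL : L.IsHermitian)
    (hLyap : L * ρ θ + ρ θ * L = (2 : ℂ) • ρ') :
    (ρ θ * L * L).trace =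
      ((∑ x, p' x ^ 2 / p x θ : ℝ) : ℂ)
        + ((∑ x, p x θ *
            (4 * (‖ζ' x‖ ^ 2 - ‖(inner ℂ (ζ x θ) (ζ' x) : ℂ)‖ ^ 2)) : ℝ) : ℂ) := by
  set v := fun x => flagged (ζ x θ).ofLp x
  set v' := fun x => flagged (ζ' x).ofLp x
  have hρt : ∀ t, ρ t = outerSum (p · t) (fun x => flagged (ζ x t).ofLp x)
      (fun x => flagged (ζ x t).ofLp x) := fun t => by
    simp only [hρ, outerSum, kronecker_single_eq_vecMulVec_flagged]
  have hρ'eq : ρ' = outerSumDeriv (p · θ) p' v v' := by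
    ext a b
    refine (hρ' a b).unique ?_
    simp only [hρt]
    exact hasDerivAt_outerSum_apply hp'
      (fun x => hasDerivAt_flagged_apply (hasDerivAt_euclideanSpace_apply (hζ' x)) x) a b
  have hv : ∀ x y, star (v x) ⬝ᵥ v y = if x = y then 1 else 0 := by
    intro x y
    simp only [v, star_flagged_dotProduct_flagged, star_dotProduct_ofLp]
    split_ifs with h
    · rw [h, inner_self_eq_norm_sq_to_K, hζunit]; norm_num
    · rfl
  have hv' : ∀ x y, x ≠ y → star (v x) ⬝ᵥ v' y = 0 := by
    simp +contextual [v, v', star_flagged_dotProduct_flagged]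
  have hc : ∀ x, star (star (v x) ⬝ᵥ v' x) = -(star (v x) ⬝ᵥ v' x) := by
    simpa [v, v', star_flagged_dotProduct_flagged, star_dotProduct_ofLp] using
      fun x => star_inner_eq_neg_of_norm_const (hζunit x) (hζ' x)
  rw [hρt θ, hρ'eq] at hLyap
  rw [hρt θ, trace_outerSum_mul_mul_of_lyapunov (fun x => (hp01 x θ).1) hv hv' hc hL hLyap]
  simp [v, v', star_flagged_dotProduct_flagged, star_dotProduct_ofLp, inner_self_eq_norm_sq_to_K]

/-- QFI of a classical–quantum (flagged) ensemble
`ρ(θ) = Σₓ pₓ(θ) ζₓζₓ* ⊗ eₓeₓ*` equals the classical Fisher information of the weights plus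
the average of the conditional pure-state QFIs. -/
theorem cq_state_QFI
    {d k : ℕ}
    (p : Fin k → ℝ → ℝ) (p' : Fin k → ℝ)
    (θ : ℝ)
    (hp01 : ∀ x t, p x t ∈ Set.Ioo (0 : ℝ) 1)
    (hpsum : ∀ t, ∑ x, p x t = 1)
    (hpdiff : ∀ x t, DifferentiableAt ℝ (p x) t)
    (hp' : ∀ x, HasDerivAt (p x) (p' x) θ)
    (ζ : Fin k → ℝ → EuclideanSpace ℂ (Fin d)) (ζ' : Fin k → EuclideanSpace ℂ (Fin d))
    (hζunit : ∀ x t, ‖ζ x t‖ = 1)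
    (hζdiff : ∀ x t, DifferentiableAt ℝ (ζ x) t)
    (hζ' : ∀ x, HasDerivAt (ζ x) (ζ' x) θ)
    (ρ : ℝ → Matrix (Fin d × Fin k) (Fin d × Fin k) ℂ)
    (hρ : ∀ t, ρ t = ∑ x, ((p x t : ℝ) : ℂ) •
      (Matrix.vecMulVec (fun i => ζ x t i) (fun j => conj (ζ x t j)) ⊗ₖ
        Matrix.single x x (1 : ℂ)))
    (ρ' : Matrix (Fin d × Fin k) (Fin d × Fin k) ℂ)
    (hρ' : ∀ a b, HasDerivAt (fun t => ρ t a b) (ρ' a b) θ)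
    (L : Matrix (Fin d × Fin k) (Fin d × Fin k) ℂ)
    (hL : L.IsHermitian)
    (hLyap : L * ρ θ + ρ θ * L = (2 : ℂ) • ρ') :
    (ρ θ * L * L).trace =
      ((∑ x, p' x ^ 2 / p x θ : ℝ) : ℂ)
        + ((∑ x, p x θ *
            (4 * (‖ζ' x‖ ^ 2 - ‖(inner ℂ (ζ x θ) (ζ' x) : ℂ)‖ ^ 2)) : ℝ) : ℂ) :=
  cq_state_QFI_general p p' θ hp01 hp' ζ ζ' hζunit hζ' ρ hρ ρ' hρ' L hL hLyap
end

section
/- Let H_S be a complex Hilbert space and (e_x)_{x∈ℕ} an orthonormal basis of a complex Hilbert space H_I. Let θ ↦ Φ(θ) = Σ_x ζ_x(θ) ⊗ e_x be a differentiable family of unit vectors in H_S ⊗ H_I, with each ζ_x differentiable and ∂_θΦ = Σ_x (∂_θζ_x) ⊗ e_x (norm-convergent), and ζ_x(θ) ≠ 0 for every x. Suppose the zero-diagonal condition holds at θ: ⟨ζ_x(θ), ∂_θζ_x(θ)⟩ = ⟨Φ(θ), ∂_θΦ(θ)⟩ ‖ζ_x(θ)‖² for every x. Then the pure-state QFI of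 Φ decomposes as the convex combination of conditional pure-state QFIs: 4(‖∂_θΦ‖² − |⟨Φ, ∂_θΦ⟩|²) = Σ_x (4‖∂_θζ_x‖² − 4|⟨ζ_x, ∂_θζ_x⟩|²/‖ζ_x‖²) = Σ_x ‖ζ_x‖² · 4( ‖∂_θζ_x‖²/‖ζ_x‖² − |⟨ζ_x, ∂_θζ_x⟩|²/‖ζ_x‖⁴ ). -/
/-! Orthonormality of `(e x)` makes `Σₓ ζₓ ⊗ eₓ` an orthogonal expansion, so inner products of
such expansions are the sums of the componentwise inner products; in particular
`Σₓ ‖ζₓ‖² = ‖Φ‖² = 1` and `Σₓ ‖∂ζₓ‖² = ‖∂Φ‖²`. Under the zero-diagonal condition the subtracted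
term of the `x`-th conditional QFI is `4 |⟨Φ, ∂Φ⟩|² ‖ζₓ‖²`, and these sum to `4 |⟨Φ, ∂Φ⟩|²`. -/

section TensorExpansion

variable {𝕜 H_S H_I E ι : Type*} [RCLike 𝕜]
  [NormedAddCommGroup H_S] [InnerProductSpace 𝕜 H_S]
  [NormedAddCommGroup H_I] [InnerProductSpace 𝕜 H_I]
  [NormedAddCommGroup E] [InnerProductSpace 𝕜 E]
  {tens : H_S →ₗ[𝕜] H_I →ₗ[𝕜] E} {v : ι → H_I}

theorem inner_tensor_eq_of_hasSum_tensor_orthonormal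
    (htens : ∀ a b c d, inner 𝕜 (tens a b) (tens c d) = inner 𝕜 a c * inner 𝕜 b d)
    (hv : Orthonormal 𝕜 v) {b : ι → H_S} {T : E}
    (hT : HasSum (fun y => tens (b y) (v y)) T) (a : H_S) (x : ι) :
    inner 𝕜 (tens a (v x)) T = inner 𝕜 a (b x) := by
  have hsingle : HasSum (fun y => inner 𝕜 (tens a (v x)) (tens (b y) (v y)))
      (inner 𝕜 a (b x)) := by
    convert hasSum_single x fun y hyx => ?_ using 1
    · rw [htens, inner_self_eq_one_of_norm_eq_one (hv.1 x), mul_one]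
    · rw [htens, hv.inner_eq_zero hyx.symm, mul_zero]
  exact ((innerSL 𝕜 (tens a (v x))).hasSum hT).unique hsingle

theorem hasSum_inner_of_hasSum_tensor_orthonormal
    (htens : ∀ a b c d, inner 𝕜 (tens a b) (tens c d) = inner 𝕜 a c * inner 𝕜 b d)
    (hv : Orthonormal 𝕜 v) {a b : ι → H_S} {S T : E}
    (hS : HasSum (fun x => tens (a x) (v x)) S) (hT : HasSum (fun y => tens (b y) (v y)) T) :
    HasSum (fun x => inner 𝕜 (a x) (b x)) (inner 𝕜 S T) := by
  simpa only [innerSLFlip_apply_apply, inner_tensor_eq_of_hasSum_tensor_orthonormal htens hv hT]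
    using (innerSLFlip 𝕜 T).hasSum hS

theorem hasSum_norm_sq_of_hasSum_tensor_orthonormal
    (htens : ∀ a b c d, inner 𝕜 (tens a b) (tens c d) = inner 𝕜 a c * inner 𝕜 b d)
    (hv : Orthonormal 𝕜 v) {a : ι → H_S} {S : E}
    (hS : HasSum (fun x => tens (a x) (v x)) S) :
    HasSum (fun x => ‖a x‖ ^ 2) (‖S‖ ^ 2) := by
  simpa only [RCLike.reCLM_apply, inner_self_eq_norm_sq]
    using RCLike.reCLM.hasSum (hasSum_inner_of_hasSum_tensor_orthonormal htens hv hS hS)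

end TensorExpansion

theorem norm_inner_sq_div_norm_sq_of_inner_eq_mul_norm_sq {𝕜 H : Type*} [RCLike 𝕜]
    [NormedAddCommGroup H] [InnerProductSpace 𝕜 H] {z w : H} {c : 𝕜}
    (h : inner 𝕜 z w = c * (‖z‖ : 𝕜) ^ 2) :
    ‖inner 𝕜 z w‖ ^ 2 / ‖z‖ ^ 2 = ‖c‖ ^ 2 * ‖z‖ ^ 2 := by
  rcases eq_or_ne z 0 with rfl | hz
  · simp
  · rw [h, norm_mul, norm_pow, RCLike.norm_ofReal, abs_norm]
    field_simp

theorem qfi_convex_decomposition_of_zero_diagonal_general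
    {H_S H_I E : Type*}
    [NormedAddCommGroup H_S] [InnerProductSpace ℂ H_S]
    [NormedAddCommGroup H_I] [InnerProductSpace ℂ H_I]
    [NormedAddCommGroup E] [InnerProductSpace ℂ E]
    (tens : H_S →ₗ[ℂ] H_I →ₗ[ℂ] E)
    (htens : ∀ (a : H_S) (b : H_I) (c : H_S) (d : H_I),
      (inner ℂ (tens a b) (tens c d) : ℂ) = (inner ℂ a c : ℂ) * (inner ℂ b d : ℂ))
    (e : HilbertBasis ℕ ℂ H_I)
    (ζ ζd : ℕ → ℝ → H_S)
    (θ : ℝ)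
    (hζne : ∀ x, ζ x θ ≠ 0)
    (Φ Φd : ℝ → E)
    (hΦsum : ∀ t, HasSum (fun x => tens (ζ x t) (e x)) (Φ t))
    (hΦdsum : ∀ t, HasSum (fun x => tens (ζd x t) (e x)) (Φd t))
    (hunit : ∀ t, ‖Φ t‖ = 1)
    (hzero : ∀ x, (inner ℂ (ζ x θ) (ζd x θ) : ℂ) =
      (inner ℂ (Φ θ) (Φd θ) : ℂ) * ((‖ζ x θ‖ : ℂ) ^ 2)) :
    4 * (‖Φd θ‖ ^ 2 - ‖(inner ℂ (Φ θ) (Φd θ) : ℂ)‖ ^ 2) =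
        ∑' x, (4 * ‖ζd x θ‖ ^ 2
          - 4 * ‖(inner ℂ (ζ x θ) (ζd x θ) : ℂ)‖ ^ 2 / ‖ζ x θ‖ ^ 2) ∧
      4 * (‖Φd θ‖ ^ 2 - ‖(inner ℂ (Φ θ) (Φd θ) : ℂ)‖ ^ 2) =
        ∑' x, ‖ζ x θ‖ ^ 2 *
          (4 * (‖ζd x θ‖ ^ 2 / ‖ζ x θ‖ ^ 2
            - ‖(inner ℂ (ζ x θ) (ζd x θ) : ℂ)‖ ^ 2 / ‖ζ x θ‖ ^ 4)) := by
  set c := inner ℂ (Φ θ) (Φd θ)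
  have hnorm : HasSum (fun x => ‖ζ x θ‖ ^ 2) 1 := by
    simpa only [hunit θ, one_pow]
      using hasSum_norm_sq_of_hasSum_tensor_orthonormal htens e.orthonormal (hΦsum θ)
  have hdnorm := hasSum_norm_sq_of_hasSum_tensor_orthonormal htens e.orthonormal (hΦdsum θ)
  have hdecomp : HasSum
      (fun x => 4 * ‖ζd x θ‖ ^ 2 - 4 * ‖inner ℂ (ζ x θ) (ζd x θ)‖ ^ 2 / ‖ζ x θ‖ ^ 2)
      (4 * (‖Φd θ‖ ^ 2 - ‖c‖ ^ 2)) := by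
    simp_rw [mul_div_assoc, ← mul_sub,
      norm_inner_sq_div_norm_sq_of_inner_eq_mul_norm_sq (hzero _)]
    simpa only [mul_one] using (hdnorm.sub (hnorm.mul_left (‖c‖ ^ 2))).mul_left 4
  refine ⟨hdecomp.tsum_eq.symm, hdecomp.tsum_eq.symm.trans (tsum_congr fun x => ?_)⟩
  have := norm_ne_zero_iff.mpr (hζne x)
  field_simp

/-- (Theorem 1 of the paper, pure-state form.)
If `Φ(θ) = Σₓ ζₓ(θ) ⊗ eₓ` with `(eₓ)` an orthonormal basis of the idler space and the
zero-diagonal condition `⟨ζₓ, ∂ζₓ⟩ = ⟨Φ, ∂Φ⟩‖ζₓ‖²` holds, then the pure-state QFI of `Φ`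
decomposes as a convex combination of the conditional pure-state QFIs. -/
theorem qfi_convex_decomposition_of_zero_diagonal
    {H_S H_I E : Type*}
    [NormedAddCommGroup H_S] [InnerProductSpace ℂ H_S]
    [NormedAddCommGroup H_I] [InnerProductSpace ℂ H_I] [CompleteSpace H_I]
    [NormedAddCommGroup E] [InnerProductSpace ℂ E]
    (tens : H_S →ₗ[ℂ] H_I →ₗ[ℂ] E)
    (htens : ∀ (a : H_S) (b : H_I) (c : H_S) (d : H_I),
      (inner ℂ (tens a b) (tens c d) : ℂ) = (inner ℂ a c : ℂ) * (inner ℂ b d : ℂ))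
    (e : HilbertBasis ℕ ℂ H_I)
    (ζ ζd : ℕ → ℝ → H_S)
    (hζ : ∀ x t, HasDerivAt (ζ x) (ζd x t) t)
    (θ : ℝ)
    (hζne : ∀ x, ζ x θ ≠ 0)
    (Φ Φd : ℝ → E)
    (hΦsum : ∀ t, HasSum (fun x => tens (ζ x t) (e x)) (Φ t))
    (hΦdsum : ∀ t, HasSum (fun x => tens (ζd x t) (e x)) (Φd t))
    (hΦderiv : ∀ t, HasDerivAt Φ (Φd t) t)
    (hunit : ∀ t, ‖Φ t‖ = 1)
    (hzero : ∀ x, (inner ℂ (ζ x θ) (ζd x θ) : ℂ) =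
      (inner ℂ (Φ θ) (Φd θ) : ℂ) * ((‖ζ x θ‖ : ℂ) ^ 2)) :
    4 * (‖Φd θ‖ ^ 2 - ‖(inner ℂ (Φ θ) (Φd θ) : ℂ)‖ ^ 2) =
        ∑' x, (4 * ‖ζd x θ‖ ^ 2
          - 4 * ‖(inner ℂ (ζ x θ) (ζd x θ) : ℂ)‖ ^ 2 / ‖ζ x θ‖ ^ 2) ∧
      4 * (‖Φd θ‖ ^ 2 - ‖(inner ℂ (Φ θ) (Φd θ) : ℂ)‖ ^ 2) =
        ∑' x, ‖ζ x θ‖ ^ 2 *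
          (4 * (‖ζd x θ‖ ^ 2 / ‖ζ x θ‖ ^ 2
            - ‖(inner ℂ (ζ x θ) (ζd x θ) : ℂ)‖ ^ 2 / ‖ζ x θ‖ ^ 4)) :=
  qfi_convex_decomposition_of_zero_diagonal_general tens htens e ζ ζd θ hζne Φ Φd hΦsum hΦdsum hunit
    hzero
end

section
/- Let Φ : ℝ → ℂ^m ⊗ ℂ^k be a differentiable family of unit vectors and θ₀ ∈ ℝ. Then there exists an orthonormal basis (e_x)_{x=1}^k of ℂ^k such that, writing Φ(θ) = Σ_{x=1}^k ζ_x(θ) ⊗ e_x with ζ_x(θ) ∈ ℂ^m, one has ⟨ζ_x(θ₀), ∂_θζ_x(θ₀)⟩ = ⟨Φ(θ₀), ∂_θΦ(θ₀)⟩ ‖ζ_x(θ₀)‖² for every x = 1, …, k. -/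
/-!
The operator `T = Tr_S |Φ^⊥⟩⟨Φ|` on `ℂ^k`, with `Φ^⊥ = ∂Φ - ⟨Φ, ∂Φ⟩ Φ`, satisfies
`⟨e, T e⟩ = ⟨ζ, ∂ζ⟩ - ⟨Φ, ∂Φ⟩ ‖ζ‖²` for the component `ζ` of `Φ` along a unit vector `e`, and it
is traceless since `tr T = ⟨Φ, Φ^⊥⟩ = 0`. So it suffices to know Fillmore's theorem: a traceless
operator has zero diagonal in some orthonormal basis. By the Toeplitz–Hausdorff theorem the
numerical range `{⟨x, T x⟩ : ‖x‖ = 1}` is convex, hence contains the average `tr T / n = 0` of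
the diagonal entries; a unit vector `v` with `⟨v, T v⟩ = 0` starts the basis, and the compression
of `T` to `v^⊥`, again traceless, supplies the rest by induction on the dimension.
-/

open ComplexConjugate
open scoped InnerProductSpace

section NumericalRange

variable {E : Type*} [NormedAddCommGroup E] [InnerProductSpace ℂ E]

def numericalRange (T : E →ₗ[ℂ] E) : Set ℂ := {z | ∃ x, ‖x‖ = 1 ∧ ⟪x, T x⟫_ℂ = z}

lemma inner_smul_map_smul_self (T : E →ₗ[ℂ] E) (c : ℂ) (x : E) :
    ⟪c • x, T (c • x)⟫_ℂ = conj c * c * ⟪x, T x⟫_ℂ := by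
  rw [map_smul, inner_smul_left, inner_smul_right, mul_assoc]

lemma mem_numericalRange_of_inner_map_self_eq {T : E →ₗ[ℂ] E} {w : E} (hw : w ≠ 0) {t : ℝ}
    (h : ⟪w, T w⟫_ℂ = t * ‖w‖ ^ 2) : (t : ℂ) ∈ numericalRange T := by
  have hnorm : (‖w‖ : ℂ) ≠ 0 := by exact_mod_cast norm_ne_zero_iff.mpr hw
  refine ⟨(‖w‖⁻¹ : ℂ) • w, norm_smul_inv_norm hw, ?_⟩
  rw [inner_smul_map_smul_self, h, map_inv₀, Complex.conj_ofReal]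
  field_simp

lemma linearIndependent_pair_of_inner_map_self {T : E →ₗ[ℂ] E} {x y : E} (hx : x ≠ 0)
    (hTx : ⟪x, T x⟫_ℂ = 0) (hTy : ⟪y, T y⟫_ℂ ≠ 0) : LinearIndependent ℂ ![x, y] := by
  refine LinearIndependent.pair_iff.mpr fun a b hab => ?_
  have hq := congrArg (fun z => ⟪z, T z⟫_ℂ) (eq_neg_of_add_eq_zero_right hab)
  simp only [← neg_smul, inner_smul_map_smul_self, hTx, mul_zero, mul_eq_zero, hTy, or_false,
    Complex.conj_mul', sq_eq_zero_iff, Complex.ofReal_eq_zero, norm_eq_zero] at hq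
  subst hq
  simpa [hx] using hab

lemma exists_norm_eq_one_im_mul_add_conj_mul_eq_zero (A B : ℂ) :
    ∃ ω : ℂ, ‖ω‖ = 1 ∧ (ω * A + conj ω * B).im = 0 := by
  set D := A - conj B
  set ω := Complex.exp (↑(-D.arg) * Complex.I)
  have hωD : ω * D = ‖D‖ := by
    calc ω * D = ω * (‖D‖ * Complex.exp (D.arg * Complex.I)) := by
          rw [Complex.norm_mul_exp_arg_mul_I]
      _ = ‖D‖ := by
          rw [mul_left_comm, ← Complex.exp_add, Complex.ofReal_neg, neg_mul, neg_add_cancel,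
            Complex.exp_zero, mul_one]
  refine ⟨ω, Complex.norm_exp_ofReal_mul_I _, ?_⟩
  have hconj : (conj ω * B).im = -(ω * conj B).im := by
    rw [← Complex.conj_im, map_mul, Complex.conj_conj]
  have him := congrArg Complex.im hωD
  rw [mul_sub, Complex.sub_im, Complex.ofReal_im] at him
  rw [Complex.add_im, hconj]
  linarith

/- Rotating `y` by a phase `ω` makes the cross term of `z ↦ ⟪z, T z⟫` on the segment from `x`
to `ω y` real, so the intermediate value theorem applies to it. -/
lemma ofReal_mem_numericalRange {T : E →ₗ[ℂ] E} {x y : E} (hx : ‖x‖ = 1) (hy : ‖y‖ = 1)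
    (hTx : ⟪x, T x⟫_ℂ = 0) (hTy : ⟪y, T y⟫_ℂ = 1) {t : ℝ} (ht : t ∈ Set.Icc (0 : ℝ) 1) :
    (t : ℂ) ∈ numericalRange T := by
  obtain ⟨ω, hω, him⟩ := exists_norm_eq_one_im_mul_add_conj_mul_eq_zero ⟪x, T y⟫_ℂ ⟪y, T x⟫_ℂ
  set r := (ω * ⟪x, T y⟫_ℂ + conj ω * ⟪y, T x⟫_ℂ).re
  have hcross : ω * ⟪x, T y⟫_ℂ + conj ω * ⟪y, T x⟫_ℂ = r := Complex.ext rfl him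
  have hωω : conj ω * ω = 1 := by
    rw [Complex.conj_mul', hω]; norm_num
  let v : ℝ → E := fun s => ((1 - s : ℝ) : ℂ) • x + ((s : ℂ) * ω) • y
  have hqv : ∀ s : ℝ, ⟪v s, T (v s)⟫_ℂ = ((s ^ 2 + (1 - s) * s * r : ℝ) : ℂ) := by
    intro s
    simp only [v, map_add, map_smul, inner_add_left, inner_add_right, inner_smul_left,
      inner_smul_right, hTx, hTy, map_mul, Complex.conj_ofReal]
    push_cast
    linear_combination ((1 - s) * s : ℂ) * hcross + (s : ℂ) ^ 2 * hωω
  have hv0 : v 0 = x := by simp [v]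
  have hv1 : ‖v 1‖ = 1 := by simp [v, norm_smul, hω, hy]
  let h : ℝ → ℝ := fun s => s ^ 2 + (1 - s) * s * r - t * ‖v s‖ ^ 2
  have hcont : Continuous h := by fun_prop
  obtain ⟨s, -, hs⟩ : ∃ s ∈ Set.Icc (0 : ℝ) 1, h s = 0 :=
    intermediate_value_Icc zero_le_one hcont.continuousOn
      ⟨by simp [h, hv0, hx, ht.1], by simp [h, hv1, ht.2]⟩
  have hvs : v s ≠ 0 := by
    intro hvs
    obtain ⟨h1, h2⟩ := LinearIndependent.pair_iff.mp (linearIndependent_pair_of_inner_map_self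
      (norm_ne_zero_iff.mp (by simp [hx])) hTx (by simp [hTy])) _ _ hvs
    have hω0 : ω ≠ 0 := norm_ne_zero_iff.mp (by simp [hω])
    rw [Complex.ofReal_eq_zero] at h1
    rw [mul_eq_zero, Complex.ofReal_eq_zero, or_iff_left hω0] at h2
    linarith
  have hs' : s ^ 2 + (1 - s) * s * r = t * ‖v s‖ ^ 2 := by
    simp only [h] at hs; linarith
  exact mem_numericalRange_of_inner_map_self_eq hvs (by rw [hqv, hs']; push_cast; ring)

theorem convex_numericalRange (T : E →ₗ[ℂ] E) : Convex ℝ (numericalRange T) := by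
  rintro _ ⟨x, hx, rfl⟩ _ ⟨y, hy, rfl⟩ a b ha hb hab
  set α := ⟪x, T x⟫_ℂ
  set β := ⟪y, T y⟫_ℂ
  by_cases hαβ : α = β
  · refine ⟨x, hx, ?_⟩
    rw [← hαβ, ← add_smul, hab, one_smul]
  set S : E →ₗ[ℂ] E := (β - α)⁻¹ • (T - α • LinearMap.id)
  have hS : ∀ z : E, ‖z‖ = 1 → ⟪z, S z⟫_ℂ = (β - α)⁻¹ * (⟪z, T z⟫_ℂ - α) := by
    intro z hz
    simp [S, inner_self_eq_norm_sq_to_K, hz]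
  have hβα : β - α ≠ 0 := sub_ne_zero.mpr (Ne.symm hαβ)
  obtain ⟨z, hz, hSz⟩ := ofReal_mem_numericalRange (T := S) hx hy
    (by rw [hS x hx, sub_self, mul_zero]) (by rw [hS y hy, inv_mul_cancel₀ hβα])
    ⟨hb, by linarith⟩
  refine ⟨z, hz, ?_⟩
  rw [hS z hz] at hSz
  rw [Complex.real_smul, Complex.real_smul, eq_sub_of_add_eq hab]
  field_simp at hSz
  push_cast
  linear_combination hSz

theorem zero_mem_numericalRange_of_trace_eq_zero [FiniteDimensional ℂ E] [Nontrivial E]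
    {T : E →ₗ[ℂ] E} (hT : LinearMap.trace ℂ E T = 0) : 0 ∈ numericalRange T := by
  set b := stdOrthonormalBasis ℂ E
  set n := Module.finrank ℂ E
  have hn : (n : ℝ) ≠ 0 := by exact_mod_cast Module.finrank_pos.ne'
  have hmem := (convex_numericalRange T).sum_mem (t := Finset.univ) (w := fun _ => (n : ℝ)⁻¹)
    (z := fun i => ⟪b i, T (b i)⟫_ℂ) (fun _ _ => by positivity)
    (by simp [Finset.card_univ, hn]) (fun i _ => ⟨b i, b.orthonormal.1 i, rfl⟩)
  rwa [← Finset.smul_sum, ← LinearMap.trace_eq_sum_inner, hT, smul_zero] at hmem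

end NumericalRange

section Compression

variable {E : Type*} [NormedAddCommGroup E] [InnerProductSpace ℂ E]

noncomputable def Submodule.compression (K : Submodule ℂ E) [K.HasOrthogonalProjection]
    (T : E →ₗ[ℂ] E) : K →ₗ[ℂ] K :=
  K.orthogonalProjectionOnto.toLinearMap ∘ₗ T ∘ₗ K.subtype

lemma Submodule.inner_compression_apply (K : Submodule ℂ E) [K.HasOrthogonalProjection]
    (T : E →ₗ[ℂ] E) (u w : K) : ⟪(u : E), K.compression T w⟫_ℂ = ⟪(u : E), T w⟫_ℂ :=
  K.inner_orthogonalProjectionOnto_eq_of_mem_left u (T w)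

variable [FiniteDimensional ℂ E]

lemma exists_orthonormalBasis_coe_eq_fin_cons {n : ℕ} {v : E} (hv : ‖v‖ = 1)
    (c : OrthonormalBasis (Fin n) ℂ (ℂ ∙ v)ᗮ) :
    ∃ b : OrthonormalBasis (Fin (n + 1)) ℂ E, ⇑b = Fin.cons v fun i => (c i : E) := by
  have hon : Orthonormal ℂ (Fin.cons v fun i => (c i : E) : Fin (n + 1) → E) := by
    have hc := c.orthonormal.comp_linearIsometry (ℂ ∙ v)ᗮ.subtypeₗᵢ
    have hperp : ∀ i, ⟪v, (c i : E)⟫_ℂ = 0 := fun i =>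
      Submodule.mem_orthogonal_singleton_iff_inner_right.mp (c i).2
    rw [orthonormal_iff_ite] at hc ⊢
    intro i j
    cases i using Fin.cases <;> cases j using Fin.cases
    · simp [hv]
    · simp [hperp, (Fin.succ_ne_zero _).symm]
    · simp [inner_eq_zero_symm.mp (hperp _), Fin.succ_ne_zero]
    · simpa using hc _ _
  have hcard : Fintype.card (Fin (n + 1)) = Module.finrank ℂ E := by
    rw [← (ℂ ∙ v).finrank_add_finrank_orthogonal, finrank_span_singleton (norm_ne_zero_iff.mp
      (by simp [hv])), Module.finrank_eq_card_basis c.toBasis]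
    simp [add_comm]
  exact ⟨(basisOfOrthonormalOfCardEqFinrank hon hcard).toOrthonormalBasis (by simpa using hon),
    by simp⟩

lemma trace_eq_inner_add_trace_compression {v : E} (hv : ‖v‖ = 1) (T : E →ₗ[ℂ] E) :
    LinearMap.trace ℂ E T
      = ⟪v, T v⟫_ℂ + LinearMap.trace ℂ _ ((ℂ ∙ v)ᗮ.compression T) := by
  set c := stdOrthonormalBasis ℂ (ℂ ∙ v)ᗮ
  obtain ⟨b, hb⟩ := exists_orthonormalBasis_coe_eq_fin_cons hv c
  rw [LinearMap.trace_eq_sum_inner T b, LinearMap.trace_eq_sum_inner _ c, Fin.sum_univ_succ, hb]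
  simp [Submodule.inner_compression_apply]

theorem exists_orthonormalBasis_inner_apply_self_eq_zero {n : ℕ}
    (hn : Module.finrank ℂ E = n) {T : E →ₗ[ℂ] E} (hT : LinearMap.trace ℂ E T = 0) :
    ∃ b : OrthonormalBasis (Fin n) ℂ E, ∀ i, ⟪b i, T (b i)⟫_ℂ = 0 := by
  induction n generalizing E with
  | zero => exact ⟨(stdOrthonormalBasis ℂ E).reindex (finCongr hn), fun i => i.elim0⟩
  | succ n ih =>
    have : Nontrivial E := Module.nontrivial_of_finrank_eq_succ hn
    obtain ⟨v, hv, hTv⟩ := zero_mem_numericalRange_of_trace_eq_zero hT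
    have : Fact (Module.finrank ℂ E = n + 1) := ⟨hn⟩
    have hK : Module.finrank ℂ (ℂ ∙ v)ᗮ = n :=
      Submodule.finrank_orthogonal_span_singleton (norm_ne_zero_iff.mp (by simp [hv]))
    have hTK : LinearMap.trace ℂ _ ((ℂ ∙ v)ᗮ.compression T) = 0 := by
      rwa [trace_eq_inner_add_trace_compression hv, hTv, zero_add] at hT
    obtain ⟨c, hc⟩ := ih hK hTK
    obtain ⟨b, hb⟩ := exists_orthonormalBasis_coe_eq_fin_cons hv c
    refine ⟨b, Fin.cases ?_ fun i => ?_⟩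
    · simpa [hb] using hTv
    · simpa [hb, Submodule.inner_compression_apply] using hc i

end Compression

section PartialTrace

variable {ι κ : Type*}

def EuclideanSpace.slice (Φ : EuclideanSpace ℂ (ι × κ)) (i : ι) : EuclideanSpace ℂ κ :=
  WithLp.toLp 2 fun j => Φ (i, j)

lemma EuclideanSpace.slice_sub (Φ Ψ : EuclideanSpace ℂ (ι × κ)) (i : ι) :
    (Φ - Ψ).slice i = Φ.slice i - Ψ.slice i := rfl

lemma EuclideanSpace.slice_smul (c : ℂ) (Φ : EuclideanSpace ℂ (ι × κ)) (i : ι) :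
    (c • Φ).slice i = c • Φ.slice i := rfl

lemma EuclideanSpace.inner_slice [Fintype κ] (e : EuclideanSpace ℂ κ) (Φ : EuclideanSpace ℂ (ι × κ))
    (i : ι) : ⟪e, Φ.slice i⟫_ℂ = ∑ j, conj (e j) * Φ (i, j) := by
  simp [EuclideanSpace.slice, PiLp.inner_apply, mul_comm]

lemma EuclideanSpace.sum_inner_slice [Fintype ι] [Fintype κ] (Φ Ψ : EuclideanSpace ℂ (ι × κ)) :
    ∑ i, ⟪Φ.slice i, Ψ.slice i⟫_ℂ = ⟪Φ, Ψ⟫_ℂ := by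
  simp [EuclideanSpace.slice, PiLp.inner_apply, Fintype.sum_prod_type]

/-- The partial trace `Tr_S |Ψ⟩⟨Φ|` over the first tensor factor. -/
noncomputable def partialTraceOuter [Fintype ι] [Fintype κ] (Φ Ψ : EuclideanSpace ℂ (ι × κ)) :
    EuclideanSpace ℂ κ →ₗ[ℂ] EuclideanSpace ℂ κ :=
  ∑ i, (InnerProductSpace.rankOne ℂ (Ψ.slice i) (Φ.slice i)).toLinearMap

lemma trace_partialTraceOuter [Fintype ι] [Fintype κ] (Φ Ψ : EuclideanSpace ℂ (ι × κ)) :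
    LinearMap.trace ℂ _ (partialTraceOuter Φ Ψ) = ⟪Φ, Ψ⟫_ℂ := by
  simp [partialTraceOuter, InnerProductSpace.trace_rankOne, EuclideanSpace.sum_inner_slice]

lemma inner_partialTraceOuter_apply_self [Fintype ι] [Fintype κ] (Φ Ψ : EuclideanSpace ℂ (ι × κ))
    (e : EuclideanSpace ℂ κ) :
    ⟪e, partialTraceOuter Φ Ψ e⟫_ℂ = ∑ i, conj ⟪e, Φ.slice i⟫_ℂ * ⟪e, Ψ.slice i⟫_ℂ := by
  simp [partialTraceOuter]

end PartialTrace

theorem exists_zero_diagonal_idler_basis_general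
    {m k : ℕ}
    (Φ : ℝ → EuclideanSpace ℂ (Fin m × Fin k))
    (Φd : ℝ → EuclideanSpace ℂ (Fin m × Fin k))
    (hunit : ∀ t, ‖Φ t‖ = 1)
    (θ₀ : ℝ) :
    ∃ e : OrthonormalBasis (Fin k) ℂ (EuclideanSpace ℂ (Fin k)),
      ∀ x : Fin k,
        (∑ i : Fin m, conj (∑ j : Fin k, conj (e x j) * Φ θ₀ (i, j)) *
            (∑ j : Fin k, conj (e x j) * Φd θ₀ (i, j)))
          = (inner ℂ (Φ θ₀) (Φd θ₀) : ℂ) *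
            ((∑ i : Fin m, ‖∑ j : Fin k, conj (e x j) * Φ θ₀ (i, j)‖ ^ 2 : ℝ) : ℂ) := by
  set c := ⟪Φ θ₀, Φd θ₀⟫_ℂ
  have htr : LinearMap.trace ℂ _ (partialTraceOuter (Φ θ₀) (Φd θ₀ - c • Φ θ₀)) = 0 := by
    rw [trace_partialTraceOuter, inner_sub_right, inner_smul_right, inner_self_eq_norm_sq_to_K,
      hunit]
    simp [c]
  obtain ⟨e, he⟩ := exists_orthonormalBasis_inner_apply_self_eq_zero
    (finrank_euclideanSpace_fin (𝕜 := ℂ)) htr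
  refine ⟨e, fun x => ?_⟩
  have hdiag := he x
  simp only [inner_partialTraceOuter_apply_self, EuclideanSpace.slice_sub,
    EuclideanSpace.slice_smul, inner_sub_right, inner_smul_right, mul_sub,
    mul_left_comm _ c] at hdiag
  rw [Finset.sum_sub_distrib, ← Finset.mul_sum, sub_eq_zero] at hdiag
  simpa only [← EuclideanSpace.inner_slice, Complex.ofReal_sum, Complex.ofReal_pow,
    ← Complex.conj_mul'] using hdiag

/-- (Existence part of Theorem 1.) For a differentiable family of unit
vectors `Φ(θ) ∈ ℂ^m ⊗ ℂ^k` (coordinates indexed by `Fin m × Fin k`) and any `θ₀`, there is an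
orthonormal basis `(eₓ)` of `ℂ^k` such that the conditional signal vectors
`ζₓ(θ)ᵢ = Σⱼ conj(eₓⱼ) Φ(θ)ᵢⱼ` satisfy the zero-diagonal condition
`⟨ζₓ, ∂ζₓ⟩ = ⟨Φ, ∂Φ⟩ ‖ζₓ‖²` at `θ₀` for every `x`. -/
theorem exists_zero_diagonal_idler_basis
    {m k : ℕ}
    (Φ : ℝ → EuclideanSpace ℂ (Fin m × Fin k))
    (Φd : ℝ → EuclideanSpace ℂ (Fin m × Fin k))
    (hΦ : ∀ t, HasDerivAt Φ (Φd t) t)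
    (hunit : ∀ t, ‖Φ t‖ = 1)
    (θ₀ : ℝ) :
    ∃ e : OrthonormalBasis (Fin k) ℂ (EuclideanSpace ℂ (Fin k)),
      ∀ x : Fin k,
        (∑ i : Fin m, conj (∑ j : Fin k, conj (e x j) * Φ θ₀ (i, j)) *
            (∑ j : Fin k, conj (e x j) * Φd θ₀ (i, j)))
          = (inner ℂ (Φ θ₀) (Φd θ₀) : ℂ) *
            ((∑ i : Fin m, ‖∑ j : Fin k, conj (e x j) * Φ θ₀ (i, j)‖ ^ 2 : ℝ) : ℂ) :=
  exists_zero_diagonal_idler_basis_general Φ Φd hunit θ₀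
end

section
/- Let (ξ_n)_{n=1}^k be the standard orthonormal basis of ℂ^k, r ∈ ℂ^k, and θ ↦ φ_n(θ) ∈ H_S differentiable families in a complex Hilbert space H_S. Set N(θ) := 1 − Σ_n |r_n|²‖φ_n(θ)‖² with 0 ≤ N(θ) < 1, let V be a k×k unitary matrix with entries V_{mn}, define the conditional vectors ζ_x(θ) := (1−N(θ))^{−1/2} Σ_n r_n conj(V_{nx}) φ_n(θ), and define the operator X(θ) on ℂ^k by matrix entries X_{mn}(θ) := r_m conj(r_n) ⟨φ_n(θ), ∂_θφ_m(θ)⟩. Then for every x = 1, …, k: ⟨ζ_x(θ), ∂_θζ_x(θ)⟩ = (∂_θN/(2(1−N))) ‖ζ_x(θ)‖² + (1/(1−N)) ⟨Vξ_x, X(θ) Vξ_x⟩. -/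
/-!
Write `ζₓ = g • Sₓ` with `g = (1 - N)^{-1/2}` real and `Sₓ = Σₙ rₙ conj(V_{nx}) φₙ`.
Since `g' = g · N'/(2(1 - N))`, the product rule gives
`⟨ζₓ, ζₓ'⟩ = (N'/(2(1 - N))) ‖ζₓ‖² + g² ⟨Sₓ, Sₓ'⟩`, and expanding both sums in
`⟨Sₓ, Sₓ'⟩` turns it into the quadratic form `⟨Vξₓ, X Vξₓ⟩`.
-/

open ComplexConjugate Matrix

theorem HasDerivAt.inv_sqrt {f : ℝ → ℝ} {f' x : ℝ} (hf : HasDerivAt f f' x) (hx : 0 < f x) :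
    HasDerivAt (fun t => (√(f t))⁻¹) ((√(f x))⁻¹ * (-f' / (2 * f x))) x := by
  have hs : 0 < √(f x) := Real.sqrt_pos.mpr hx
  refine ((hf.sqrt hx.ne').inv hs.ne').congr_deriv ?_
  field_simp
  rw [Real.sq_sqrt hx.le]

section InnerProduct

variable {𝕜 E : Type*} [RCLike 𝕜] [NormedAddCommGroup E] [InnerProductSpace 𝕜 E]

theorem exists_hasDerivAt_smul_inner_eq [NormedSpace ℝ E] [IsScalarTower ℝ 𝕜 E]
    {g : ℝ → ℝ} {S : ℝ → E} {ℓ θ : ℝ} {S' : E}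
    (hg : HasDerivAt g (g θ * ℓ) θ) (hS : HasDerivAt S S' θ) :
    ∃ D : E, HasDerivAt (fun t => g t • S t) D θ ∧
      inner 𝕜 (g θ • S θ) D =
        ((ℓ * ‖g θ • S θ‖ ^ 2 : ℝ) : 𝕜) + ((g θ ^ 2 : ℝ) : 𝕜) * inner 𝕜 (S θ) S' := by
  refine ⟨_, hg.smul hS, ?_⟩
  rw [mul_comm, ← smul_smul, add_comm, inner_add_right, RCLike.real_smul_eq_coe_smul (K := 𝕜) ℓ,
    inner_smul_right, inner_self_eq_norm_sq_to_K]
  simp only [RCLike.real_smul_eq_coe_smul (K := 𝕜) (g θ), inner_smul_left, inner_smul_right,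
    RCLike.conj_ofReal]
  push_cast
  ring

theorem inner_sum_smul_eq_dotProduct_mulVec {ι : Type*} [Fintype ι] (r v : ι → 𝕜)
    (φ ψ : ι → E) :
    inner 𝕜 (∑ n, (r n * conj (v n)) • φ n) (∑ n, (r n * conj (v n)) • ψ n) =
      star v ⬝ᵥ (Matrix.of fun m n => r m * conj (r n) * inner 𝕜 (φ n) (ψ m)) *ᵥ v := by
  simp only [sum_inner, inner_sum, inner_smul_left, inner_smul_right, dotProduct,
    Matrix.mulVec, Matrix.of_apply, Pi.star_apply, Finset.mul_sum, RCLike.star_def]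
  refine Finset.sum_congr rfl fun m _ => Finset.sum_congr rfl fun n _ => ?_
  simp only [map_mul, RCLike.conj_conj]
  ring

end InnerProduct

theorem conditional_state_overlap_formula_general
    {H_S : Type*} [NormedAddCommGroup H_S] [InnerProductSpace ℂ H_S]
    {k : ℕ}
    (r : Fin k → ℂ) (φ φd : Fin k → ℝ → H_S)
    (hφ : ∀ n t, HasDerivAt (φ n) (φd n t) t)
    (N : ℝ → ℝ)
    (θ : ℝ) (hN1 : N θ < 1)
    (N' : ℝ) (hN' : HasDerivAt N N' θ)
    (V : Matrix (Fin k) (Fin k) ℂ)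
    (ζ : Fin k → ℝ → H_S)
    (hζ : ∀ x t, ζ x t =
      ((Real.sqrt (1 - N t) : ℝ) : ℂ)⁻¹ • ∑ n, (r n * conj (V n x)) • φ n t)
    (X : Matrix (Fin k) (Fin k) ℂ)
    (hX : ∀ m n, X m n = r m * conj (r n) * (inner ℂ (φ n θ) (φd m θ) : ℂ)) :
    ∀ x : Fin k, ∃ ζd : H_S, HasDerivAt (ζ x) ζd θ ∧
      (inner ℂ (ζ x θ) ζd : ℂ) =
        ((N' / (2 * (1 - N θ)) : ℝ) : ℂ) * ((‖ζ x θ‖ ^ 2 : ℝ) : ℂ)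
          + ((1 / (1 - N θ) : ℝ) : ℂ) *
              (star (fun m : Fin k => V m x) ⬝ᵥ X.mulVec (fun n : Fin k => V n x)) := by
  intro x
  have hpos : 0 < 1 - N θ := sub_pos.mpr hN1
  have hS : HasDerivAt (fun t => ∑ n, (r n * conj (V n x)) • φ n t)
      (∑ n, (r n * conj (V n x)) • φd n θ) θ :=
    HasDerivAt.fun_sum fun n _ => (hφ n θ).const_smul _
  have hg : HasDerivAt (fun t => (√(1 - N t))⁻¹)
      ((√(1 - N θ))⁻¹ * (N' / (2 * (1 - N θ)))) θ := by
    simpa only [neg_neg] using (hN'.const_sub 1).inv_sqrt hpos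
  have hζx : ζ x = fun t => (√(1 - N t))⁻¹ • ∑ n, (r n * conj (V n x)) • φ n t :=
    funext fun t => by rw [hζ, ← Complex.ofReal_inv, Complex.coe_smul]
  obtain ⟨D, hD, hinner⟩ := exists_hasDerivAt_smul_inner_eq (𝕜 := ℂ) hg hS
  have hXof : X = Matrix.of fun m n => r m * conj (r n) * inner ℂ (φ n θ) (φd m θ) :=
    Matrix.ext hX
  refine ⟨D, hζx ▸ hD, ?_⟩
  simp only [hζx]
  rw [hinner, inner_sum_smul_eq_dotProduct_mulVec, hXof, inv_pow, Real.sq_sqrt hpos.le,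
    RCLike.ofReal_mul, one_div]
  rfl

/-- For the conditional signal states
`ζₓ(θ) = (1-N(θ))^{-1/2} Σₙ rₙ conj(V_{nx}) φₙ(θ)` of the idler-to-signal 1-LOCC scheme with
unitary preparation `V`, one has
`⟨ζₓ, ∂ζₓ⟩ = (∂N/(2(1-N)))‖ζₓ‖² + (1/(1-N)) ⟨Vξₓ, X Vξₓ⟩`, where `X` is the idler-space
operator with entries `X_{mn} = r_m conj(r_n) ⟨φₙ, ∂φₘ⟩` and `Vξₓ` is the `x`-th column
of `V`. -/
theorem conditional_state_overlap_formula
    {H_S : Type*} [NormedAddCommGroup H_S] [InnerProductSpace ℂ H_S]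
    {k : ℕ}
    (r : Fin k → ℂ) (φ φd : Fin k → ℝ → H_S)
    (hφ : ∀ n t, HasDerivAt (φ n) (φd n t) t)
    (N : ℝ → ℝ) (hN : ∀ t, N t = 1 - ∑ n, ‖r n‖ ^ 2 * ‖φ n t‖ ^ 2)
    (θ : ℝ) (hN0 : 0 ≤ N θ) (hN1 : N θ < 1)
    (N' : ℝ) (hN' : HasDerivAt N N' θ)
    (V : Matrix (Fin k) (Fin k) ℂ) (hV : Vᴴ * V = 1)
    (ζ : Fin k → ℝ → H_S)
    (hζ : ∀ x t, ζ x t =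
      ((Real.sqrt (1 - N t) : ℝ) : ℂ)⁻¹ • ∑ n, (r n * conj (V n x)) • φ n t)
    (X : Matrix (Fin k) (Fin k) ℂ)
    (hX : ∀ m n, X m n = r m * conj (r n) * (inner ℂ (φ n θ) (φd m θ) : ℂ)) :
    ∀ x : Fin k, ∃ ζd : H_S, HasDerivAt (ζ x) ζd θ ∧
      (inner ℂ (ζ x θ) ζd : ℂ) =
        ((N' / (2 * (1 - N θ)) : ℝ) : ℂ) * ((‖ζ x θ‖ ^ 2 : ℝ) : ℂ)
          + ((1 / (1 - N θ) : ℝ) : ℂ) *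
              (star (fun m : Fin k => V m x) ⬝ᵥ X.mulVec (fun n : Fin k => V n x)) :=
  conditional_state_overlap_formula_general r φ φd hφ N θ hN1 N' hN' V ζ hζ X hX
end

section
/- Let H_S and H_I be complex Hilbert spaces, (ξ_n) an orthonormal family in H_I, r_n ∈ ℂ, and θ ↦ φ_n(θ) ∈ H_S differentiable families such that Σ_n r_n φ_n(θ) ⊗ ξ_n is norm-convergent and differentiable with derivative Σ_n r_n (∂_θφ_n)(θ) ⊗ ξ_n. Let v be a fixed unit vector orthogonal to H_S ⊗ H_I (work in ℂ ⊕ (H_S ⊗ H_I) with v = (1,0)). Set M(θ) := 1 + Σ_n |r_n|²‖φ_n(θ)‖² and ψ(θ) := M(θ)^{−1/2} (v + Σ_n r_n φ_n(θ) ⊗ ξ_n). Then ψ(θ) is a unit vector and Q(θ; ψ) = (4/M(θ)) Σ_n |r_n|² ‖∂_θφ_n(θ)‖² − (4/M(θ)²) |Σ_n |r_n|² ⟨φ_n(θ), ∂_θφ_n(θ)⟩|². -/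
open ComplexConjugate
open scoped InnerProductSpace

/-! With `g θ := v + Σₙ rₙ φₙ(θ) ⊗ ξₙ`, orthonormality of `(ξₙ)` and `v ⊥ H_S ⊗ H_I` give
`‖g‖² = M`, `⟪g, g'⟫ = Σₙ |rₙ|² ⟪φₙ, ∂φₙ⟫` and `‖g'‖² = Σₙ |rₙ|² ‖∂φₙ‖²`, so `ψ = g / ‖g‖`.
For a normalised curve, `‖ψ'‖² - |⟪ψ, ψ'⟫|²` is the Gram determinant of `(g, g')` divided by
`‖g‖⁴`: differentiating the normalisation factor only adds a multiple of `g` to `ψ'`, which the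
Gram determinant does not see. -/

section

variable {E : Type*} [NormedAddCommGroup E] [InnerProductSpace ℂ E]

theorem norm_sq_mul_norm_sq_sub_norm_inner_sq_smul_add (x y : E) (a b c : ℂ) :
    ‖b • x‖ ^ 2 * ‖a • x + c • y‖ ^ 2 - ‖⟪b • x, a • x + c • y⟫_ℂ‖ ^ 2 =
      ‖b‖ ^ 2 * ‖c‖ ^ 2 * (‖x‖ ^ 2 * ‖y‖ ^ 2 - ‖⟪x, y⟫_ℂ‖ ^ 2) := by
  have hnorm (z : E) : (‖z‖ : ℂ) ^ 2 = ⟪z, z⟫_ℂ := (inner_self_eq_norm_sq_to_K z).symm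
  have habs (z : ℂ) : (‖z‖ : ℂ) ^ 2 = conj z * z := (Complex.conj_mul' z).symm
  apply Complex.ofReal_injective
  push_cast
  simp only [hnorm, habs, inner_conj_symm, inner_add_left, inner_add_right, inner_smul_left,
    inner_smul_right, map_add, map_mul, Complex.conj_conj]
  ring

theorem norm_ofReal_inv_norm_smul_self {x : E} (hx : x ≠ 0) : ‖((‖x‖⁻¹ : ℝ) : ℂ) • x‖ = 1 := by
  rw [Complex.ofReal_inv]
  exact norm_smul_inv_norm hx

theorem HasDerivAt.exists_hasDerivAt_inv_norm_smul {g : ℝ → E} {g' : E} {t : ℝ}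
    (hg : HasDerivAt g g' t) (h0 : g t ≠ 0) :
    ∃ a : ℂ, HasDerivAt (fun s => ((‖g s‖⁻¹ : ℝ) : ℂ) • g s)
      (a • g t + ((‖g t‖⁻¹ : ℝ) : ℂ) • g') t := by
  have hinv : DifferentiableAt ℝ (fun s => ‖g s‖⁻¹) t :=
    (hg.differentiableAt.norm ℂ h0).inv (norm_ne_zero_iff.mpr h0)
  exact ⟨_, (hinv.hasDerivAt.ofReal_comp.smul hg).congr_deriv (add_comm _ _)⟩

theorem HasDerivAt.exists_hasDerivAt_inv_norm_smul_norm_sq_sub_norm_inner_sq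
    {g : ℝ → E} {g' : E} {t : ℝ} (hg : HasDerivAt g g' t) (h0 : g t ≠ 0) :
    ∃ ψd : E, HasDerivAt (fun s => ((‖g s‖⁻¹ : ℝ) : ℂ) • g s) ψd t ∧
      ‖ψd‖ ^ 2 - ‖⟪((‖g t‖⁻¹ : ℝ) : ℂ) • g t, ψd⟫_ℂ‖ ^ 2 =
        (‖g t‖ ^ 2 * ‖g'‖ ^ 2 - ‖⟪g t, g'⟫_ℂ‖ ^ 2) / ‖g t‖ ^ 4 := by
  obtain ⟨a, hψ⟩ := hg.exists_hasDerivAt_inv_norm_smul h0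
  refine ⟨_, hψ, ?_⟩
  have hunit := norm_ofReal_inv_norm_smul_self h0
  have hgram := norm_sq_mul_norm_sq_sub_norm_inner_sq_smul_add (g t) g' a
    ((‖g t‖⁻¹ : ℝ) : ℂ) ((‖g t‖⁻¹ : ℝ) : ℂ)
  rw [hunit, one_pow, one_mul, Complex.norm_real, Real.norm_eq_abs, abs_inv, abs_norm] at hgram
  rw [hgram]
  field_simp

theorem HasSum.inner_of_pairwise_inner_eq_zero {ι : Type*} {x y : ι → E} {X Y : E}
    (hx : HasSum x X) (hy : HasSum y Y) (h : Pairwise fun n m => ⟪x n, y m⟫_ℂ = 0) :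
    HasSum (fun n => ⟪x n, y n⟫_ℂ) ⟪X, Y⟫_ℂ := by
  classical
  have hdiag (n : ι) : ⟪x n, Y⟫_ℂ = ⟪x n, y n⟫_ℂ :=
    ((innerSL ℂ (x n)).hasSum hy).unique (hasSum_single n fun m hm => h (Ne.symm hm))
  have hX := ((innerSL ℂ Y).hasSum hx).star
  simpa only [innerSL_apply_apply, RCLike.star_def, inner_conj_symm, hdiag] using hX

theorem inner_eq_zero_of_hasSum {ι : Type*} {x : ι → E} {X : E} (v : E) (hx : HasSum x X)
    (h : ∀ n, ⟪v, x n⟫_ℂ = 0) : ⟪v, X⟫_ℂ = 0 :=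
  ((innerSL ℂ v).hasSum hx).unique (by simpa only [innerSL_apply_apply, h] using hasSum_zero)

end

section

variable {ι H_S H_I E : Type*}
  [NormedAddCommGroup H_S] [InnerProductSpace ℂ H_S]
  [NormedAddCommGroup H_I] [InnerProductSpace ℂ H_I]
  [NormedAddCommGroup E] [InnerProductSpace ℂ E]
  {tens : H_S →ₗ[ℂ] H_I →ₗ[ℂ] E} {ξ : ι → H_I} {r : ι → ℂ}

theorem hasSum_inner_of_orthonormal
    (htens : ∀ a b c d, ⟪tens a b, tens c d⟫_ℂ = ⟪a, c⟫_ℂ * ⟪b, d⟫_ℂ) (hξ : Orthonormal ℂ ξ)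
    {χ χ' : ι → H_S} {X Y : E}
    (hX : HasSum (fun n => r n • tens (χ n) (ξ n)) X)
    (hY : HasSum (fun n => r n • tens (χ' n) (ξ n)) Y) :
    HasSum (fun n => ((‖r n‖ ^ 2 : ℝ) : ℂ) * ⟪χ n, χ' n⟫_ℂ) ⟪X, Y⟫_ℂ := by
  have hterm (n m : ι) : ⟪r n • tens (χ n) (ξ n), r m • tens (χ' m) (ξ m)⟫_ℂ =
      conj (r n) * r m * ⟪χ n, χ' m⟫_ℂ * ⟪ξ n, ξ m⟫_ℂ := by
    rw [inner_smul_left, inner_smul_right, htens]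
    ring
  refine (hX.inner_of_pairwise_inner_eq_zero hY fun n m hnm => ?_).congr_fun fun n => ?_
  · simp only [hterm, hξ.inner_eq_zero hnm, mul_zero]
  · rw [hterm, inner_self_eq_norm_sq_to_K, hξ.norm_eq_one, Complex.conj_mul']
    push_cast
    ring

theorem hasSum_norm_sq_of_orthonormal
    (htens : ∀ a b c d, ⟪tens a b, tens c d⟫_ℂ = ⟪a, c⟫_ℂ * ⟪b, d⟫_ℂ) (hξ : Orthonormal ℂ ξ)
    {χ : ι → H_S} {X : E}
    (hX : HasSum (fun n => r n • tens (χ n) (ξ n)) X) :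
    HasSum (fun n => ‖r n‖ ^ 2 * ‖χ n‖ ^ 2) (‖X‖ ^ 2) := by
  have h := Complex.reCLM.hasSum (hasSum_inner_of_orthonormal htens hξ hX hX)
  simp only [Complex.reCLM_apply, Complex.re_ofReal_mul] at h
  simpa only [← RCLike.re_to_complex, inner_self_eq_norm_sq] using h

end

theorem pdc_outgoing_QFI_general
    {H_S H_I E : Type*}
    [NormedAddCommGroup H_S] [InnerProductSpace ℂ H_S]
    [NormedAddCommGroup H_I] [InnerProductSpace ℂ H_I]
    [NormedAddCommGroup E] [InnerProductSpace ℂ E]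
    (tens : H_S →ₗ[ℂ] H_I →ₗ[ℂ] E)
    (htens : ∀ (a : H_S) (b : H_I) (c : H_S) (d : H_I),
      (inner ℂ (tens a b) (tens c d) : ℂ) = (inner ℂ a c : ℂ) * (inner ℂ b d : ℂ))
    (ξ : ℕ → H_I) (hξ : Orthonormal ℂ ξ)
    (r : ℕ → ℂ) (φ φd : ℕ → ℝ → H_S)
    (v : E) (hv : ‖v‖ = 1)
    (hvorth : ∀ (a : H_S) (b : H_I), (inner ℂ v (tens a b) : ℂ) = 0)
    (M : ℝ → ℝ) (hM : ∀ t, M t = 1 + ∑' n, ‖r n‖ ^ 2 * ‖φ n t‖ ^ 2)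
    (S D : ℝ → E)
    (hS : ∀ t, HasSum (fun n => r n • tens (φ n t) (ξ n)) (S t))
    (hD : ∀ t, HasSum (fun n => r n • tens (φd n t) (ξ n)) (D t))
    (hSD : ∀ t, HasDerivAt S (D t) t)
    (ψ : ℝ → E) (hψ : ∀ t, ψ t = ((Real.sqrt (M t) : ℝ) : ℂ)⁻¹ • (v + S t))
    (θ : ℝ) :
    ‖ψ θ‖ = 1 ∧
      ∃ ψd : E, HasDerivAt ψ ψd θ ∧
        4 * (‖ψd‖ ^ 2 - ‖(inner ℂ (ψ θ) ψd : ℂ)‖ ^ 2) =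
          4 / M θ * ∑' n, ‖r n‖ ^ 2 * ‖φd n θ‖ ^ 2
            - 4 / (M θ) ^ 2 *
              ‖(∑' n, ((‖r n‖ ^ 2 : ℝ) : ℂ) * (inner ℂ (φ n θ) (φd n θ) : ℂ))‖ ^ 2 := by
  have hv_perp {χ : ℕ → H_S} {X : E} (hX : HasSum (fun n => r n • tens (χ n) (ξ n)) X) :
      ⟪v, X⟫_ℂ = 0 :=
    inner_eq_zero_of_hasSum v hX fun n => by rw [inner_smul_right, hvorth, mul_zero]
  have hnorm_sq (t : ℝ) : ‖v + S t‖ ^ 2 = M t := by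
    rw [@norm_add_sq ℂ, hv_perp (hS t), hv, hM t,
      (hasSum_norm_sq_of_orthonormal htens hξ (hS t)).tsum_eq]
    simp
  have hne : v + S θ ≠ 0 := fun h => by
    simpa [inner_add_right, hv_perp (hS θ), hv] using congrArg (inner ℂ v) h
  obtain rfl : ψ = fun t => ((‖v + S t‖⁻¹ : ℝ) : ℂ) • (v + S t) := funext fun t => by
    rw [hψ t, ← hnorm_sq t, Real.sqrt_sq (norm_nonneg _), Complex.ofReal_inv]
  obtain ⟨ψd, hψd, hqfi⟩ :=
    ((hSD θ).const_add v).exists_hasDerivAt_inv_norm_smul_norm_sq_sub_norm_inner_sq hne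
  refine ⟨norm_ofReal_inv_norm_smul_self hne, ψd, hψd, ?_⟩
  rw [hqfi, inner_add_left, hv_perp (hD θ), zero_add,
    (hasSum_inner_of_orthonormal htens hξ (hS θ) (hD θ)).tsum_eq,
    (hasSum_norm_sq_of_orthonormal htens hξ (hD θ)).tsum_eq, ← hnorm_sq θ]
  field_simp

/-- (QFI of the outgoing weakly-pumped PDC state, Eq. (58).) For
`ψ(θ) = M(θ)^{-1/2} (v + Σₙ rₙ φₙ(θ) ⊗ ξₙ)`, with `v` a unit vector orthogonal to all simple
tensors, `(ξₙ)` orthonormal, and `M(θ) = 1 + Σₙ |rₙ|²‖φₙ(θ)‖²`, the state `ψ(θ)` is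
normalised and its pure-state QFI equals
`(4/M) Σₙ |rₙ|²‖∂φₙ‖² - (4/M²)|Σₙ |rₙ|²⟨φₙ, ∂φₙ⟩|²`. -/
theorem pdc_outgoing_QFI
    {H_S H_I E : Type*}
    [NormedAddCommGroup H_S] [InnerProductSpace ℂ H_S]
    [NormedAddCommGroup H_I] [InnerProductSpace ℂ H_I]
    [NormedAddCommGroup E] [InnerProductSpace ℂ E]
    (tens : H_S →ₗ[ℂ] H_I →ₗ[ℂ] E)
    (htens : ∀ (a : H_S) (b : H_I) (c : H_S) (d : H_I),
      (inner ℂ (tens a b) (tens c d) : ℂ) = (inner ℂ a c : ℂ) * (inner ℂ b d : ℂ))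
    (ξ : ℕ → H_I) (hξ : Orthonormal ℂ ξ)
    (r : ℕ → ℂ) (φ φd : ℕ → ℝ → H_S)
    (hφ : ∀ n t, HasDerivAt (φ n) (φd n t) t)
    (v : E) (hv : ‖v‖ = 1)
    (hvorth : ∀ (a : H_S) (b : H_I), (inner ℂ v (tens a b) : ℂ) = 0)
    (hsum : ∀ t, Summable fun n => ‖r n‖ ^ 2 * ‖φ n t‖ ^ 2)
    (M : ℝ → ℝ) (hM : ∀ t, M t = 1 + ∑' n, ‖r n‖ ^ 2 * ‖φ n t‖ ^ 2)
    (S D : ℝ → E)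
    (hS : ∀ t, HasSum (fun n => r n • tens (φ n t) (ξ n)) (S t))
    (hD : ∀ t, HasSum (fun n => r n • tens (φd n t) (ξ n)) (D t))
    (hSD : ∀ t, HasDerivAt S (D t) t)
    (ψ : ℝ → E) (hψ : ∀ t, ψ t = ((Real.sqrt (M t) : ℝ) : ℂ)⁻¹ • (v + S t))
    (θ : ℝ) :
    ‖ψ θ‖ = 1 ∧
      ∃ ψd : E, HasDerivAt ψ ψd θ ∧
        4 * (‖ψd‖ ^ 2 - ‖(inner ℂ (ψ θ) ψd : ℂ)‖ ^ 2) =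
          4 / M θ * ∑' n, ‖r n‖ ^ 2 * ‖φd n θ‖ ^ 2
            - 4 / (M θ) ^ 2 *
              ‖(∑' n, ((‖r n‖ ^ 2 : ℝ) : ℂ) * (inner ℂ (φ n θ) (φd n θ) : ℂ))‖ ^ 2 :=
  pdc_outgoing_QFI_general tens htens ξ hξ r φ φd v hv hvorth M hM S D hS hD hSD ψ hψ θ
end

section
/- Let H be a complex Hilbert space, v ∈ H a fixed unit vector, and θ ↦ Φ(θ) ∈ H a differentiable family of nonzero vectors with ⟨v, Φ(θ)⟩ = 0 for all θ (hence ⟨v, ∂_θΦ⟩ = 0). Set Λ(θ) := ‖Φ(θ)‖² and M(θ) := 1 + Λ(θ), and define the unit vectors ψ_biph(θ) := Φ(θ)/√Λ(θ) and ψ_PDC(θ) := (v + Φ(θ))/√M(θ). Then Λ·Q(θ; ψ_biph) = 4‖∂_θΦ‖² − (4/Λ)|⟨Φ, ∂_θΦ⟩|² and M·Q(θ; ψ_PDC) = 4‖∂_θΦ‖² − (4/M)|⟨Φ, ∂_θΦ⟩|²; consequently Q(θ; ψ_biph) = (M/Λ) Q(θ; ψ_PDC) − (4/(M Λ²)) |⟨Φ,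 ∂_θΦ⟩|². -/
/-!
Normalising a curve `F` gives `ψ = ‖F‖⁻¹ F`, whose velocity is `‖F‖⁻¹ F'` plus a multiple of `ψ`.
For a unit vector the QFI does not see multiples of `ψ` in the velocity, so
`‖F‖² Q(ψ) = 4‖F'‖² - (4/‖F‖²)|⟨F, F'⟩|²`. Apply this to `F = Φ` and to `F = v + Φ`: by Pythagoras
`‖v + Φ‖² = M`, and `⟨v, Φ(t)⟩ = 0` for all `t` forces `⟨v, Φ'⟩ = 0`, so `⟨v + Φ, Φ'⟩ = ⟨Φ, Φ'⟩`.
The third identity is then algebra in `Λ` and `M = 1 + Λ`.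
-/

open scoped InnerProductSpace ComplexConjugate

section

variable {H : Type*} [NormedAddCommGroup H] [InnerProductSpace ℂ H]

/-- `qfi ψ ψ'` is `Q(θ; ψ)` when `ψ'` is the derivative of the family at `θ`. -/
noncomputable def qfi (ψ ψ' : H) : ℝ := 4 * (‖ψ'‖ ^ 2 - ‖⟪ψ, ψ'⟫_ℂ‖ ^ 2)

theorem qfi_add_smul_self {ψ : H} (hψ : ‖ψ‖ = 1) (ψ' : H) (z : ℂ) :
    qfi ψ (ψ' + z • ψ) = qfi ψ ψ' := by
  have hψψ : ⟪ψ, ψ⟫_ℂ = 1 := by simp [inner_self_eq_norm_sq_to_K, hψ]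
  have hψ'ψ : ⟪ψ', ψ⟫_ℂ = conj ⟪ψ, ψ'⟫_ℂ := (inner_conj_symm ψ' ψ).symm
  simp only [qfi, @norm_add_sq ℂ H, inner_add_right, inner_smul_right, hψψ, hψ'ψ, norm_smul, hψ,
    Complex.sq_norm, Complex.normSq_add, mul_one]
  simp only [RCLike.re_to_complex, Complex.mul_re, Complex.conj_re, Complex.conj_im,
    Complex.normSq_apply]
  ring

theorem qfi_ofReal_smul (ψ φ : H) (r : ℝ) : qfi ψ ((r : ℂ) • φ) = r ^ 2 * qfi ψ φ := by
  simp only [qfi, norm_smul, inner_smul_right, norm_mul, Complex.norm_real, Real.norm_eq_abs,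
    mul_pow, sq_abs]
  ring

theorem norm_sq_mul_qfi_normalize {F : H} (h0 : F ≠ 0) (F' : H) (z : ℂ) :
    ‖F‖ ^ 2 * qfi ((‖F‖ : ℂ)⁻¹ • F) ((‖F‖ : ℂ)⁻¹ • F' + z • (‖F‖ : ℂ)⁻¹ • F) =
      4 * ‖F'‖ ^ 2 - 4 / ‖F‖ ^ 2 * ‖⟪F, F'⟫_ℂ‖ ^ 2 := by
  have hunit : ‖(‖F‖ : ℂ)⁻¹ • F‖ = 1 := norm_smul_inv_norm h0
  rw [qfi_add_smul_self hunit, ← Complex.ofReal_inv, qfi_ofReal_smul]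
  simp only [qfi, inner_smul_left, Complex.conj_ofReal, norm_mul, Complex.norm_real,
    Real.norm_eq_abs, abs_inv, abs_norm]
  field_simp

theorem HasDerivAt.exists_normalize {F : ℝ → H} {F' : H} {θ : ℝ} (hF : HasDerivAt F F' θ)
    (h0 : F θ ≠ 0) :
    ∃ z : ℂ, HasDerivAt (fun t => (‖F t‖ : ℂ)⁻¹ • F t)
      ((‖F θ‖ : ℂ)⁻¹ • F' + z • (‖F θ‖ : ℂ)⁻¹ • F θ) θ := by
  have hF0 : ‖F θ‖ ≠ 0 := norm_ne_zero_iff.2 h0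
  obtain ⟨c, hc⟩ : ∃ c, HasDerivAt (fun t => ‖F t‖⁻¹) c θ :=
    ⟨_, ((hF.differentiableAt.norm ℂ h0).hasDerivAt).inv hF0⟩
  refine ⟨c * ‖F θ‖, ?_⟩
  convert hc.ofReal_comp.smul hF using 1
  · ext t
    simp
  · rw [smul_smul, mul_assoc, ← Complex.ofReal_inv, ← Complex.ofReal_mul, mul_inv_cancel₀ hF0]
    simp

theorem inner_eq_zero_of_hasDerivAt {v : H} {Φ : ℝ → H} {Φ' : H} {θ : ℝ}
    (horth : ∀ t, ⟪v, Φ t⟫_ℂ = 0) (hΦ : HasDerivAt Φ Φ' θ) : ⟪v, Φ'⟫_ℂ = 0 := by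
  have h := (hasDerivAt_const θ v).inner ℂ hΦ
  simp only [horth, inner_zero_left, add_zero] at h
  exact h.unique (hasDerivAt_const θ 0)

theorem HasDerivAt.exists_normalize_qfi {F : ℝ → H} {F' : H} {θ : ℝ} (hF : HasDerivAt F F' θ)
    (h0 : F θ ≠ 0) :
    ∃ ψ' : H, HasDerivAt (fun t => (‖F t‖ : ℂ)⁻¹ • F t) ψ' θ ∧
      ‖F θ‖ ^ 2 * qfi ((‖F θ‖ : ℂ)⁻¹ • F θ) ψ' =
        4 * ‖F'‖ ^ 2 - 4 / ‖F θ‖ ^ 2 * ‖⟪F θ, F'⟫_ℂ‖ ^ 2 :=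
  let ⟨z, hz⟩ := hF.exists_normalize h0
  ⟨_, hz, norm_sq_mul_qfi_normalize h0 F' z⟩

end

theorem eq_div_mul_sub_of_mul_eq {Λ M Q Q' d y : ℝ} (hΛ : Λ ≠ 0) (hM : M ≠ 0) (hMΛ : M = 1 + Λ)
    (hQ : Λ * Q = 4 * d - 4 / Λ * y) (hQ' : M * Q' = 4 * d - 4 / M * y) :
    Q = M / Λ * Q' - 4 / (M * Λ ^ 2) * y := by
  obtain rfl : Q = (4 * d - 4 / Λ * y) / Λ := by rw [← hQ]; field_simp
  obtain rfl : Q' = (4 * d - 4 / M * y) / M := by rw [← hQ']; field_simp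
  subst hMΛ
  field_simp
  ring

/-- (Exact relation between the QFI of the PDC state and of the
post-selected biphoton state, Appendix F.) With `Λ = ‖Φ‖²`, `M = 1 + Λ`,
`ψ_biph = Φ/√Λ` and `ψ_PDC = (v + Φ)/√M` for a unit vector `v ⊥ Φ(θ)`:
`Λ·Q(ψ_biph) = 4‖∂Φ‖² - (4/Λ)|⟨Φ,∂Φ⟩|²`, `M·Q(ψ_PDC) = 4‖∂Φ‖² - (4/M)|⟨Φ,∂Φ⟩|²`, and
`Q(ψ_biph) = (M/Λ)Q(ψ_PDC) - (4/(MΛ²))|⟨Φ,∂Φ⟩|²`. -/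
theorem pdc_biphoton_QFI_relation
    {H : Type*} [NormedAddCommGroup H] [InnerProductSpace ℂ H]
    (v : H) (hv : ‖v‖ = 1)
    (Φ Φd : ℝ → H) (hΦ : ∀ t, HasDerivAt Φ (Φd t) t)
    (hne : ∀ t, Φ t ≠ 0) (horth : ∀ t, (inner ℂ v (Φ t) : ℂ) = 0)
    (Λ M : ℝ → ℝ) (hΛ : ∀ t, Λ t = ‖Φ t‖ ^ 2) (hM : ∀ t, M t = 1 + Λ t)
    (ψb ψp : ℝ → H)
    (hψb : ∀ t, ψb t = ((Real.sqrt (Λ t) : ℝ) : ℂ)⁻¹ • Φ t)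
    (hψp : ∀ t, ψp t = ((Real.sqrt (M t) : ℝ) : ℂ)⁻¹ • (v + Φ t))
    (θ : ℝ) :
    ∃ ψbd ψpd : H, HasDerivAt ψb ψbd θ ∧ HasDerivAt ψp ψpd θ ∧
      Λ θ * (4 * (‖ψbd‖ ^ 2 - ‖(inner ℂ (ψb θ) ψbd : ℂ)‖ ^ 2)) =
          4 * ‖Φd θ‖ ^ 2 - 4 / Λ θ * ‖(inner ℂ (Φ θ) (Φd θ) : ℂ)‖ ^ 2 ∧
      M θ * (4 * (‖ψpd‖ ^ 2 - ‖(inner ℂ (ψp θ) ψpd : ℂ)‖ ^ 2)) =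
          4 * ‖Φd θ‖ ^ 2 - 4 / M θ * ‖(inner ℂ (Φ θ) (Φd θ) : ℂ)‖ ^ 2 ∧
      4 * (‖ψbd‖ ^ 2 - ‖(inner ℂ (ψb θ) ψbd : ℂ)‖ ^ 2) =
          M θ / Λ θ * (4 * (‖ψpd‖ ^ 2 - ‖(inner ℂ (ψp θ) ψpd : ℂ)‖ ^ 2))
            - 4 / (M θ * (Λ θ) ^ 2) * ‖(inner ℂ (Φ θ) (Φd θ) : ℂ)‖ ^ 2 := by
  have hMΛ : ∀ t, M t = ‖v + Φ t‖ ^ 2 := fun t => by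
    simp [hM, hΛ, @norm_add_sq ℂ, horth, hv]
  have hvΦ : v + Φ θ ≠ 0 := by
    have : ‖v + Φ θ‖ ^ 2 ≠ 0 := by rw [← hMΛ, hM, hΛ]; positivity
    exact norm_ne_zero_iff.1 (pow_ne_zero_iff two_ne_zero |>.1 this)
  obtain rfl : ψb = fun t => (‖Φ t‖ : ℂ)⁻¹ • Φ t := funext fun t => by
    rw [hψb, hΛ, Real.sqrt_sq (norm_nonneg _)]
  obtain rfl : ψp = fun t => (‖v + Φ t‖ : ℂ)⁻¹ • (v + Φ t) := funext fun t => by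
    rw [hψp, hMΛ, Real.sqrt_sq (norm_nonneg _)]
  obtain ⟨ψbd, hbd, hb⟩ := (hΦ θ).exists_normalize_qfi (hne θ)
  obtain ⟨ψpd, hpd, hp⟩ := ((hΦ θ).const_add v).exists_normalize_qfi hvΦ
  rw [inner_add_left, inner_eq_zero_of_hasDerivAt horth (hΦ θ), zero_add, ← hMΛ] at hp
  rw [← hΛ] at hb
  refine ⟨ψbd, ψpd, hbd, hpd, hb, hp, ?_⟩
  have hΛ0 : Λ θ ≠ 0 := by rw [hΛ]; exact pow_ne_zero 2 (norm_ne_zero_iff.2 (hne θ))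
  have hM0 : M θ ≠ 0 := by rw [hM, hΛ]; positivity
  exact eq_div_mul_sub_of_mul_eq hΛ0 hM0 (hM θ) hb hp
end

section
/- Let A, D, b, λ₁, λ₂ ∈ ℂ, t ∈ ℝ, and let M be the symmetric 2×2 complex matrix with rows (A, b) and (b, D). Let w ∈ ℂ be any complex number with w² = (A − D)² + 4b². Then the quadratic form (λ₁, λ₂)·exp(tM)·(λ₁, λ₂)ᵀ equals e^{(A+D)t/2} [ (λ₁² + λ₂²) cosh(tw/2) + s · ( (λ₁² − λ₂²)(A − D)t/2 + 2 λ₁ λ₂ b t ) ], where s := sinh(tw/2)/(tw/2) if tw ≠ 0 and s := 1 if tw = 0 (this value is independent of the choice of square root w). -/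
open Matrix
open scoped Nat

/-!
Write `t • M = ((A + D) t / 2) • 1 + N` with `N` traceless. By Cayley–Hamilton
`N ^ 2 = -det N • 1 = (t w / 2) ^ 2 • 1`, so the even and odd parts of the exponential series
of `N` collapse to `cosh (t w / 2) • 1` and `sinhc (t w / 2) • N`, while the central scalar
part contributes the factor `exp ((A + D) t / 2)`.
-/

namespace Complex

noncomputable def sinhc (z : ℂ) : ℂ := if z = 0 then 1 else sinh z / z

theorem hasSum_sinhc (z : ℂ) :
    HasSum (fun k : ℕ => z ^ (2 * k) / ((2 * k + 1)! : ℂ)) (sinhc z) := by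
  rcases eq_or_ne z 0 with rfl | hz
  · convert hasSum_ite_eq 0 (1 : ℂ) using 1
    · funext k
      rcases eq_or_ne k 0 with rfl | hk
      · simp
      · simp [hk]
    · simp [sinhc]
  · rw [sinhc, if_neg hz]
    have hterm (k : ℕ) :
        z ^ (2 * k) / ((2 * k + 1)! : ℂ) = z ^ (2 * k + 1) / (2 * k + 1)! / z := by
      rw [eq_div_iff hz, div_mul_eq_mul_div, ← pow_succ]
    simpa only [hterm] using (hasSum_sinh z).div_const z

end Complex

open Complex in
theorem NormedSpace.exp_eq_cosh_smul_one_add_sinhc_smul {𝔸 : Type*} [Ring 𝔸] [Algebra ℂ 𝔸]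
    [TopologicalSpace 𝔸] [IsTopologicalRing 𝔸] [ContinuousSMul ℂ 𝔸] [T2Space 𝔸] {N : 𝔸} {c : ℂ}
    (h : N ^ 2 = c ^ 2 • (1 : 𝔸)) :
    NormedSpace.exp N = cosh c • (1 : 𝔸) + sinhc c • N := by
  have hpow_even (k : ℕ) : N ^ (2 * k) = c ^ (2 * k) • (1 : 𝔸) := by
    rw [pow_mul, h, smul_pow, one_pow, ← pow_mul]
  have hpow_odd (k : ℕ) : N ^ (2 * k + 1) = c ^ (2 * k) • N := by
    rw [pow_succ, hpow_even, smul_mul_assoc, one_mul]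
  rw [NormedSpace.exp_eq_tsum (𝕂 := ℂ)]
  refine HasSum.tsum_eq (HasSum.even_add_odd ?_ ?_)
  · simp_rw [hpow_even, smul_smul, ← div_eq_inv_mul]
    exact (hasSum_cosh c).smul_const _
  · simp_rw [hpow_odd, smul_smul, ← div_eq_inv_mul]
    exact (hasSum_sinhc c).smul_const N

theorem Matrix.sq_traceless_fin_two {R : Type*} [CommRing R] (a b c : R) :
    !![a, b; c, -a] ^ 2 = (a ^ 2 + b * c) • (1 : Matrix (Fin 2) (Fin 2) R) := by
  ext i j
  fin_cases i <;> fin_cases j <;> simp [sq, Matrix.mul_apply, Fin.sum_univ_two] <;> ring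

theorem Matrix.exp_smul_one_add {m : Type*} [Fintype m] [DecidableEq m] (z : ℂ)
    (N : Matrix m m ℂ) :
    NormedSpace.exp (z • (1 : Matrix m m ℂ) + N) = Complex.exp z • NormedSpace.exp N := by
  rw [Matrix.exp_add_of_commute _ _ ((Commute.one_left N).smul_left z),
    Matrix.smul_one_eq_diagonal, Matrix.exp_diagonal, Pi.exp_def, ← Complex.exp_eq_exp_ℂ,
    ← Matrix.smul_one_eq_diagonal, smul_one_mul]

/-- (Closed form of the coupled-dimer characteristic response function,
Appendix E.) For the symmetric `2×2` complex matrix `M = !![A, b; b, D]`, any `w` with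
`w² = (A-D)² + 4b²`, and `s = sinh(tw/2)/(tw/2)` (with `s = 1` when `tw = 0`), the quadratic
form of the matrix exponential satisfies
`(λ₁,λ₂)·exp(tM)·(λ₁,λ₂)ᵀ = e^{(A+D)t/2}[(λ₁²+λ₂²)cosh(tw/2) + s((λ₁²-λ₂²)(A-D)t/2 + 2λ₁λ₂bt)]`. -/
theorem coupled_dimer_characteristic_function
    (A D b lam₁ lam₂ : ℂ) (t : ℝ) (w : ℂ)
    (hw : w ^ 2 = (A - D) ^ 2 + 4 * b ^ 2)
    (M : Matrix (Fin 2) (Fin 2) ℂ) (hM : M = !![A, b; b, D])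
    (s : ℂ)
    (hs : s = if (t : ℂ) * w = 0 then 1
      else Complex.sinh ((t : ℂ) * w / 2) / ((t : ℂ) * w / 2)) :
    (![lam₁, lam₂] ⬝ᵥ (NormedSpace.exp ((t : ℂ) • M)).mulVec ![lam₁, lam₂]) =
      Complex.exp ((A + D) * t / 2) *
        ((lam₁ ^ 2 + lam₂ ^ 2) * Complex.cosh ((t : ℂ) * w / 2)
          + s * ((lam₁ ^ 2 - lam₂ ^ 2) * (A - D) * t / 2 + 2 * lam₁ * lam₂ * b * t)) := by
  set N : Matrix (Fin 2) (Fin 2) ℂ := !![(A - D) * t / 2, b * t; b * t, -((A - D) * t / 2)]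
  have hsplit : (t : ℂ) • M = ((A + D) * t / 2) • (1 : Matrix (Fin 2) (Fin 2) ℂ) + N := by
    subst hM
    ext i j
    fin_cases i <;> fin_cases j <;> simp [N] <;> ring
  have hN : N ^ 2 = ((t : ℂ) * w / 2) ^ 2 • (1 : Matrix (Fin 2) (Fin 2) ℂ) := by
    rw [Matrix.sq_traceless_fin_two]
    congr 1
    linear_combination (-(t : ℂ) ^ 2 / 4) * hw
  have hs' : s = Complex.sinhc ((t : ℂ) * w / 2) := by
    simp [hs, Complex.sinhc]
  rw [hsplit, Matrix.exp_smul_one_add, NormedSpace.exp_eq_cosh_smul_one_add_sinhc_smul hN, ← hs']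
  simp only [N, dotProduct, mulVec, smul_of, smul_cons, smul_eq_mul, smul_empty,
    Matrix.smul_apply, Matrix.add_apply, one_apply, of_apply, cons_val', cons_val_fin_one,
    Fin.sum_univ_two, cons_val_zero, cons_val_one, Fin.isValue, ↓reduceIte, zero_ne_one,
    one_ne_zero]
  ring
end
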